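/- arXiv:1410.0898 — 3 statements merged into one kernel-verified Lean document; each statement's English description precedes it below -/
import Mathlib

section
/- Let (X, μ) and (Y, ν) be standard probability spaces and let Z ⊆ X × Y be measurable. Then the proper thickness sthi(Z) equals the infimum of ∫_X f dμ + ∫_Y g dν over all measurable functions f : X → [0,1], g : Y → [0,1] satisfying f(x) + g(y) ≥ χ_Z(x, y) for all (x, y) ∈ X × Y, and the thickness thi(Z) equals the corresponding infimum over pairs satisfying f(x) + g(y) ≥ χ_Z(x, y) for μ×ν-almost every (x, y). Moreover, both infima are attained by some pair (f, g). -/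
set_option linter.unusedSectionVars false
set_option maxHeartbeats 1000000


open MeasureTheory Set
open scoped ENNReal

namespace VirtCont

variable {X Y : Type*}

/-- A semimetric on a set `S`. -/
def IsSemimetricOn (ρ : X → X → ℝ) (S : Set X) : Prop :=
  (∀ x ∈ S, ∀ y ∈ S, 0 ≤ ρ x y) ∧ (∀ x ∈ S, ρ x x = 0) ∧
  (∀ x ∈ S, ∀ y ∈ S, ρ x y = ρ y x) ∧
  (∀ x ∈ S, ∀ y ∈ S, ∀ z ∈ S, ρ x z ≤ ρ x y + ρ y z)

/-- Separability of the semimetric space `(S, ρ)`. -/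
def SepOn (ρ : X → X → ℝ) (S : Set X) : Prop :=
  ∃ D : Set X, D ⊆ S ∧ D.Countable ∧ ∀ x ∈ S, ∀ ε : ℝ, 0 < ε → ∃ d ∈ D, ρ x d < ε

/-- An admissible semimetric on `(S, μ|_S)`: a semimetric on `S`, measurable as a function
of two variables, for which some subset of `S` of full measure in `S` is separable. -/
def IsAdmissibleSemimetricOn [MeasurableSpace X] (μ : Measure X) (S : Set X)
    (ρ : X → X → ℝ) : Prop :=
  IsSemimetricOn ρ S ∧
  Measurable (fun p : S × S => ρ (p.1 : X) (p.2 : X)) ∧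
  ∃ X₀ : Set X, X₀ ⊆ S ∧ MeasurableSet X₀ ∧ μ (S \ X₀) = 0 ∧ SepOn ρ X₀

/-- An admissible semimetric on the whole space `(X, μ)`. -/
def IsAdmissibleSemimetric [MeasurableSpace X] (μ : Measure X) (ρ : X → X → ℝ) : Prop :=
  IsSemimetricOn ρ univ ∧
  Measurable (fun p : X × X => ρ p.1 p.2) ∧
  ∃ X₀ : Set X, MeasurableSet X₀ ∧ μ X₀ = 1 ∧ SepOn ρ X₀

/-- An admissible metric on `(X, μ)`. -/
def IsAdmissibleMetric [MeasurableSpace X] (μ : Measure X) (ρ : X → X → ℝ) : Prop :=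
  IsAdmissibleSemimetric μ ρ ∧ ∀ x y : X, ρ x y = 0 → x = y

/-- Continuity of `f` on `A ×ˢ B` with respect to the product of the (semi)metric
topologies of `ρX` and `ρY`. -/
def ContOnProd (ρX : X → X → ℝ) (ρY : Y → Y → ℝ) (A : Set X) (B : Set Y)
    (f : X × Y → ℝ) : Prop :=
  ∀ x ∈ A, ∀ y ∈ B, ∀ ε : ℝ, 0 < ε → ∃ δ : ℝ, 0 < δ ∧
    ∀ x' ∈ A, ∀ y' ∈ B, ρX x x' < δ → ρY y y' < δ → |f (x, y) - f (x', y')| < ε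

variable [MeasurableSpace X] [MeasurableSpace Y]

/-- A properly virtually continuous function of two variables. -/
def ProperlyVirtuallyContinuous (μ : Measure X) (ν : Measure Y) (f : X × Y → ℝ) : Prop :=
  Measurable f ∧
  ∀ ε : ℝ, 0 < ε → ∃ (X' : Set X) (Y' : Set Y),
    MeasurableSet X' ∧ MeasurableSet Y' ∧
    1 - ENNReal.ofReal ε ≤ μ X' ∧ 1 - ENNReal.ofReal ε ≤ ν Y' ∧
    ∃ ρX : X → X → ℝ, ∃ ρY : Y → Y → ℝ,
      IsAdmissibleSemimetricOn μ X' ρX ∧ IsAdmissibleSemimetricOn ν Y' ρY ∧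
      ContOnProd ρX ρY X' Y' f

/-- A virtually continuous function: one which agrees almost everywhere with a
properly virtually continuous function. -/
def VirtuallyContinuous (μ : Measure X) (ν : Measure Y) (f : X × Y → ℝ) : Prop :=
  Measurable f ∧ ∃ g : X × Y → ℝ,
    ProperlyVirtuallyContinuous μ ν g ∧ f =ᵐ[μ.prod ν] g

/-- A virtually open subset of a product of measure spaces. -/
def VirtuallyOpen (μ : Measure X) (ν : Measure Y) (Z : Set (X × Y)) : Prop :=
  ∃ (X' : Set X) (Y' : Set Y), MeasurableSet X' ∧ MeasurableSet Y' ∧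
    μ X' = 1 ∧ ν Y' = 1 ∧
    ∃ (A : ℕ → Set X) (B : ℕ → Set Y),
      (∀ n, MeasurableSet (A n)) ∧ (∀ n, MeasurableSet (B n)) ∧
      Z ∩ (X' ×ˢ Y') = ⋃ n, (A n) ×ˢ (B n)

/-- A virtually closed subset of a product of measure spaces. -/
def VirtuallyClosed (μ : Measure X) (ν : Measure Y) (Z : Set (X × Y)) : Prop :=
  VirtuallyOpen μ ν Zᶜ

/-- Proper thickness of a subset of a product of measure spaces. -/
noncomputable def sthi (μ : Measure X) (ν : Measure Y) (Z : Set (X × Y)) : ℝ≥0∞ :=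
  ⨅ (A : Set X) (B : Set Y) (_ : MeasurableSet A) (_ : MeasurableSet B)
    (_ : Z ⊆ (A ×ˢ (univ : Set Y)) ∪ ((univ : Set X) ×ˢ B)), μ A + ν B

/-- Thickness of a subset of a product of measure spaces. -/
noncomputable def thi (μ : Measure X) (ν : Measure Y) (Z : Set (X × Y)) : ℝ≥0∞ :=
  ⨅ (A : Set X) (B : Set Y) (_ : MeasurableSet A) (_ : MeasurableSet B)
    (_ : (μ.prod ν) (Z \ ((A ×ˢ (univ : Set Y)) ∪ ((univ : Set X) ×ˢ B))) = 0), μ A + ν B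

section ThicknessAux
open Filter




/-- real-function infimum over constraint set W -/
noncomputable def fInf (μ : Measure X) (ν : Measure Y) (W : Set (X × Y)) : ℝ≥0∞ :=
  ⨅ (a : X → ℝ) (b : Y → ℝ) (_ : Measurable a) (_ : Measurable b)
    (_ : ∀ x, a x ∈ Icc (0:ℝ) 1) (_ : ∀ y, b y ∈ Icc (0:ℝ) 1)
    (_ : ∀ p ∈ W, 1 ≤ a p.1 + b p.2),
    ENNReal.ofReal (∫ x, a x ∂μ) + ENNReal.ofReal (∫ y, b y ∂ν)

/-- ENNReal-function infimum over constraint set W -/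
noncomputable def eInf (μ : Measure X) (ν : Measure Y) (W : Set (X × Y)) : ℝ≥0∞ :=
  ⨅ (f : X → ℝ≥0∞) (g : Y → ℝ≥0∞) (_ : Measurable f) (_ : Measurable g)
    (_ : ∀ x, f x ≤ 1) (_ : ∀ y, g y ≤ 1)
    (_ : ∀ p ∈ W, 1 ≤ f p.1 + g p.2),
    (∫⁻ x, f x ∂μ) + (∫⁻ y, g y ∂ν)

lemma integrable_of_Icc {μ : Measure X} [IsFiniteMeasure μ] {a : X → ℝ}
    (ha : Measurable a) (h : ∀ x, a x ∈ Icc (0:ℝ) 1) : Integrable a μ :=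
  (integrable_const (1:ℝ)).mono' ha.aestronglyMeasurable
    (Eventually.of_forall fun x => abs_le.2 ⟨by linarith [(h x).1], (h x).2⟩)

lemma ofReal_integral_eq {μ : Measure X} [IsFiniteMeasure μ] {a : X → ℝ}
    (ha : Measurable a) (h : ∀ x, a x ∈ Icc (0:ℝ) 1) :
    ENNReal.ofReal (∫ x, a x ∂μ) = ∫⁻ x, ENNReal.ofReal (a x) ∂μ :=
  ofReal_integral_eq_lintegral_ofReal (integrable_of_Icc ha h)
    (Eventually.of_forall fun x => (h x).1)

lemma fInf_eq_eInf (μ : Measure X) (ν : Measure Y) [IsFiniteMeasure μ] [IsFiniteMeasure ν]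
    (W : Set (X × Y)) : fInf μ ν W = eInf μ ν W := by
  apply le_antisymm
  · refine le_iInf fun f => le_iInf fun g => le_iInf fun hf => le_iInf fun hg =>
      le_iInf fun hf1 => le_iInf fun hg1 => le_iInf fun hfeas => ?_
    have hfx : ∀ x, f x ≠ ⊤ := fun x => (lt_of_le_of_lt (hf1 x) (by norm_num)).ne
    have hgy : ∀ y, g y ≠ ⊤ := fun y => (lt_of_le_of_lt (hg1 y) (by norm_num)).ne
    have haI : ∀ x, (f x).toReal ∈ Icc (0:ℝ) 1 := fun x =>
      ⟨ENNReal.toReal_nonneg, by simpa using ENNReal.toReal_mono (by norm_num) (hf1 x)⟩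
    have hbI : ∀ y, (g y).toReal ∈ Icc (0:ℝ) 1 := fun y =>
      ⟨ENNReal.toReal_nonneg, by simpa using ENNReal.toReal_mono (by norm_num) (hg1 y)⟩
    refine le_trans (iInf_le_of_le (fun x => (f x).toReal) ?_) le_rfl
    refine iInf_le_of_le (fun y => (g y).toReal) ?_
    refine iInf_le_of_le hf.ennreal_toReal <| iInf_le_of_le hg.ennreal_toReal <|
      iInf_le_of_le haI <| iInf_le_of_le hbI <| iInf_le_of_le ?_ ?_
    · intro p hp
      have h1 : (1:ℝ≥0∞) ≤ f p.1 + g p.2 := hfeas p hp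
      have : ((1:ℝ≥0∞)).toReal ≤ (f p.1 + g p.2).toReal :=
        ENNReal.toReal_mono (by simp [ENNReal.add_ne_top, hfx, hgy]) h1
      simpa [ENNReal.toReal_add (hfx p.1) (hgy p.2)] using this
    · have h1 : ENNReal.ofReal (∫ x, (f x).toReal ∂μ) = ∫⁻ x, f x ∂μ := by
        rw [ofReal_integral_eq hf.ennreal_toReal haI]
        exact lintegral_congr fun x => ENNReal.ofReal_toReal (hfx x)
      have h2 : ENNReal.ofReal (∫ y, (g y).toReal ∂ν) = ∫⁻ y, g y ∂ν := by
        rw [ofReal_integral_eq hg.ennreal_toReal hbI]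
        exact lintegral_congr fun y => ENNReal.ofReal_toReal (hgy y)
      rw [h1, h2]
  · refine le_iInf fun a => le_iInf fun b => le_iInf fun ha => le_iInf fun hb =>
      le_iInf fun haI => le_iInf fun hbI => le_iInf fun hfeas => ?_
    refine iInf_le_of_le (fun x => ENNReal.ofReal (a x)) <|
      iInf_le_of_le (fun y => ENNReal.ofReal (b y)) <|
      iInf_le_of_le ha.ennreal_ofReal <| iInf_le_of_le hb.ennreal_ofReal <|
      iInf_le_of_le (fun x => ENNReal.ofReal_le_one.2 (haI x).2) <|
      iInf_le_of_le (fun y => ENNReal.ofReal_le_one.2 (hbI y).2) <|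
      iInf_le_of_le ?_ ?_
    · intro p hp
      rw [← ENNReal.ofReal_add (haI p.1).1 (hbI p.2).1, ← ENNReal.ofReal_one]
      exact ENNReal.ofReal_le_ofReal (hfeas p hp)
    · rw [ofReal_integral_eq ha haI, ofReal_integral_eq hb hbI]

lemma eInf_le (μ : Measure X) (ν : Measure Y) (W : Set (X × Y)) {f : X → ℝ≥0∞} {g : Y → ℝ≥0∞}
    (hf : Measurable f) (hg : Measurable g) (hf1 : ∀ x, f x ≤ 1) (hg1 : ∀ y, g y ≤ 1)
    (hfeas : ∀ p ∈ W, 1 ≤ f p.1 + g p.2) :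
    eInf μ ν W ≤ (∫⁻ x, f x ∂μ) + (∫⁻ y, g y ∂ν) :=
  iInf_le_of_le f <| iInf_le_of_le g <| iInf_le_of_le hf <| iInf_le_of_le hg <|
    iInf_le_of_le hf1 <| iInf_le_of_le hg1 <| iInf_le_of_le hfeas le_rfl

lemma eInf_le_two (μ : Measure X) (ν : Measure Y) [IsProbabilityMeasure μ]
    [IsProbabilityMeasure ν] (W : Set (X × Y)) : eInf μ ν W ≤ 2 := by
  have := eInf_le μ ν W (f := fun _ => 1) (g := fun _ => 1) measurable_const measurable_const
    (fun _ => le_rfl) (fun _ => le_rfl) (fun p _ => by simp)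
  simpa [lintegral_const, one_add_one_eq_two] using this


lemma lintegral_Ioi_eq_Ioo {μ : Measure X} (S : ℝ → Set X)
    (hS : ∀ t, 1 < t → μ (S t) = 0) :
    ∫⁻ t in Ioi (0:ℝ), μ (S t) = ∫⁻ t in Ioo (0:ℝ) 1, μ (S t) := by
  have hsplit : Ioi (0:ℝ) = Ioo 0 1 ∪ Ici 1 := by
    ext t; simp only [mem_Ioi, mem_union, mem_Ioo, mem_Ici]
    constructor
    · intro ht; rcases lt_or_ge t 1 with h1 | h1
      · exact Or.inl ⟨ht, h1⟩
      · exact Or.inr h1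
    · rintro (⟨h1, _⟩ | h1) <;> linarith
  have hdisj : Disjoint (Ioo (0:ℝ) 1) (Ici 1) := by
    rw [Set.disjoint_left]; intro t ht ht'
    exact absurd ht.2 (not_lt.2 ht')
  rw [hsplit, lintegral_union measurableSet_Ici hdisj]
  have h0 : ∫⁻ t in Ici (1:ℝ), μ (S t) = 0 := by
    rw [setLIntegral_congr (Ioi_ae_eq_Ici (a := (1:ℝ))).symm]
    rw [setLIntegral_congr_fun_ae measurableSet_Ioi
      (ae_of_all _ (fun t (ht : t ∈ Ioi (1:ℝ)) => hS t ht))]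
    simp
  rw [h0, add_zero]

lemma layercake_le {μ : Measure X} [IsFiniteMeasure μ] {a : X → ℝ}
    (ha : Measurable a) (h : ∀ x, a x ∈ Icc (0:ℝ) 1) :
    ∫⁻ t in Ioo (0:ℝ) 1, μ {x | t ≤ a x} = ENNReal.ofReal (∫ x, a x ∂μ) := by
  rw [ofReal_integral_eq ha h,
    lintegral_eq_lintegral_meas_le μ (Eventually.of_forall fun x => (h x).1) ha.aemeasurable]
  exact (lintegral_Ioi_eq_Ioo (μ := μ) (fun t => {x | t ≤ a x}) (fun t ht =>
    measure_mono_null (t := ∅)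
      (fun x hx => (not_le.2 (lt_of_le_of_lt (h x).2 ht) hx).elim) measure_empty)).symm

lemma layercake_lt {μ : Measure X} [IsFiniteMeasure μ] {a : X → ℝ}
    (ha : Measurable a) (h : ∀ x, a x ∈ Icc (0:ℝ) 1) :
    ∫⁻ t in Ioo (0:ℝ) 1, μ {x | t < a x} = ENNReal.ofReal (∫ x, a x ∂μ) := by
  rw [ofReal_integral_eq ha h,
    lintegral_eq_lintegral_meas_lt μ (Eventually.of_forall fun x => (h x).1) ha.aemeasurable]
  exact (lintegral_Ioi_eq_Ioo (μ := μ) (fun t => {x | t < a x}) (fun t ht =>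
    measure_mono_null (t := ∅)
      (fun x hx => (not_lt.2 (le_trans (h x).2 (le_of_lt ht)) hx).elim) measure_empty)).symm

noncomputable def oneSubEquiv : ℝ ≃ᵐ ℝ where
  toFun := fun t => 1 - t
  invFun := fun t => 1 - t
  left_inv := fun t => by ring
  right_inv := fun t => by ring
  measurable_toFun := measurable_const.sub measurable_id
  measurable_invFun := measurable_const.sub measurable_id

lemma layercake_sub {ν : Measure Y} [IsFiniteMeasure ν] {b : Y → ℝ}
    (hb : Measurable b) (h : ∀ y, b y ∈ Icc (0:ℝ) 1) :
    ∫⁻ t in Ioo (0:ℝ) 1, ν {y | 1 - t < b y} = ENNReal.ofReal (∫ y, b y ∂ν) := by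
  have hmp : MeasurePreserving (fun t : ℝ => 1 - t) volume volume :=
    Measure.measurePreserving_sub_left volume 1
  have hpre : (fun t : ℝ => 1 - t) ⁻¹' (Ioo (0:ℝ) 1) = Ioo (0:ℝ) 1 := by
    ext t; simp only [mem_preimage, mem_Ioo]; constructor <;> (rintro ⟨h1, h2⟩; constructor <;> linarith)
  have hres : MeasurePreserving (fun t : ℝ => 1 - t)
      (volume.restrict (Ioo (0:ℝ) 1)) (volume.restrict (Ioo (0:ℝ) 1)) := by
    have := hmp.restrict_preimage (s := Ioo (0:ℝ) 1) measurableSet_Ioo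
    rwa [hpre] at this
  have hemb : MeasurableEmbedding (fun t : ℝ => 1 - t) := oneSubEquiv.measurableEmbedding
  calc ∫⁻ t in Ioo (0:ℝ) 1, ν {y | 1 - t < b y}
      = ∫⁻ s in Ioo (0:ℝ) 1, ν {y | s < b y} :=
        hres.lintegral_comp_emb hemb (fun s => ν {y | s < b y})
    _ = ENNReal.ofReal (∫ y, b y ∂ν) := layercake_lt hb h








lemma le_value_of_le_slices {μ : Measure X} {ν : Measure Y}
    [IsProbabilityMeasure μ] [IsProbabilityMeasure ν]
    {a : X → ℝ} {b : Y → ℝ} (ha : Measurable a) (hb : Measurable b)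
    (haI : ∀ x, a x ∈ Icc (0:ℝ) 1) (hbI : ∀ y, b y ∈ Icc (0:ℝ) 1) {q : ℝ≥0∞}
    (hq : ∀ t ∈ Ioo (0:ℝ) 1, q ≤ μ {x | t ≤ a x} + ν {y | 1 - t < b y}) :
    q ≤ ENNReal.ofReal (∫ x, a x ∂μ) + ENNReal.ofReal (∫ y, b y ∂ν) := by
  have hAmeas : Measurable (fun t : ℝ => μ {x | t ≤ a x}) :=
    Antitone.measurable (fun s t hst => measure_mono (fun x hx => le_trans hst hx))
  have h1 : q = ∫⁻ _ in Ioo (0:ℝ) 1, q ∂volume := by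
    rw [setLIntegral_const, Real.volume_Ioo]
    norm_num
  rw [h1]
  calc ∫⁻ _ in Ioo (0:ℝ) 1, q ∂volume
      ≤ ∫⁻ t in Ioo (0:ℝ) 1, (μ {x | t ≤ a x} + ν {y | 1 - t < b y}) ∂volume := by
        refine lintegral_mono_ae ?_
        exact (ae_restrict_iff' measurableSet_Ioo).2 (ae_of_all _ hq)
    _ = (∫⁻ t in Ioo (0:ℝ) 1, μ {x | t ≤ a x}) + ∫⁻ t in Ioo (0:ℝ) 1, ν {y | 1 - t < b y} :=
        lintegral_add_left hAmeas _
    _ = ENNReal.ofReal (∫ x, a x ∂μ) + ENNReal.ofReal (∫ y, b y ∂ν) := by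
        rw [layercake_le ha haI, layercake_sub hb hbI]

lemma sthi_le_of_feasible {μ : Measure X} {ν : Measure Y}
    [IsProbabilityMeasure μ] [IsProbabilityMeasure ν] {Z : Set (X × Y)}
    {a : X → ℝ} {b : Y → ℝ} (ha : Measurable a) (hb : Measurable b)
    (haI : ∀ x, a x ∈ Icc (0:ℝ) 1) (hbI : ∀ y, b y ∈ Icc (0:ℝ) 1)
    (hfeas : ∀ p ∈ Z, 1 ≤ a p.1 + b p.2) :
    sthi μ ν Z ≤ ENNReal.ofReal (∫ x, a x ∂μ) + ENNReal.ofReal (∫ y, b y ∂ν) := by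
  refine le_value_of_le_slices ha hb haI hbI (fun t ht => ?_)
  refine iInf_le_of_le {x | t ≤ a x} <| iInf_le_of_le {y | 1 - t < b y} <|
    iInf_le_of_le (measurableSet_le measurable_const ha) <|
    iInf_le_of_le (measurableSet_lt measurable_const hb) <| iInf_le_of_le ?_ le_rfl
  intro p hp
  rcases le_or_gt t (a p.1) with h | h
  · exact Or.inl ⟨h, trivial⟩
  · refine Or.inr ⟨trivial, ?_⟩
    have := hfeas p hp
    simp only [mem_setOf_eq]
    linarith

lemma thi_le_of_aefeasible {μ : Measure X} {ν : Measure Y}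
    [IsProbabilityMeasure μ] [IsProbabilityMeasure ν] [SFinite ν] {Z : Set (X × Y)}
    {a : X → ℝ} {b : Y → ℝ} (ha : Measurable a) (hb : Measurable b)
    (haI : ∀ x, a x ∈ Icc (0:ℝ) 1) (hbI : ∀ y, b y ∈ Icc (0:ℝ) 1)
    (hfeas : ∀ᵐ p ∂μ.prod ν, p ∈ Z → 1 ≤ a p.1 + b p.2) :
    thi μ ν Z ≤ ENNReal.ofReal (∫ x, a x ∂μ) + ENNReal.ofReal (∫ y, b y ∂ν) := by
  refine le_value_of_le_slices ha hb haI hbI (fun t ht => ?_)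
  refine iInf_le_of_le {x | t ≤ a x} <| iInf_le_of_le {y | 1 - t < b y} <|
    iInf_le_of_le (measurableSet_le measurable_const ha) <|
    iInf_le_of_le (measurableSet_lt measurable_const hb) <| iInf_le_of_le ?_ le_rfl
  have hE : (μ.prod ν) {p : X × Y | ¬(p ∈ Z → 1 ≤ a p.1 + b p.2)} = 0 := hfeas
  refine measure_mono_null ?_ hE
  rintro p ⟨hpZ, hpc⟩
  simp only [mem_union, mem_prod, mem_setOf_eq, not_or] at hpc
  push_neg at hpc
  simp only [mem_setOf_eq]
  obtain ⟨h1, h2⟩ := hpc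
  intro hq
  have hsum := hq hpZ
  have ha' : a p.1 < t := by
    by_contra hcon
    exact (h1 (le_of_not_gt hcon)) trivial
  have hb' : b p.2 ≤ 1 - t := h2 trivial
  linarith
noncomputable def gInf (μ : Measure X) (ν : Measure Y) (Z : Set (X × Y)) : ℝ≥0∞ :=
  ⨅ (a : X → ℝ) (b : Y → ℝ) (_ : Measurable a) (_ : Measurable b)
    (_ : ∀ x, a x ∈ Icc (0:ℝ) 1) (_ : ∀ y, b y ∈ Icc (0:ℝ) 1)
    (_ : ∀ᵐ p ∂μ.prod ν, p ∈ Z → 1 ≤ a p.1 + b p.2),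
    ENNReal.ofReal (∫ x, a x ∂μ) + ENNReal.ofReal (∫ y, b y ∂ν)

lemma indicator_mem_Icc (A : Set X) (x : X) : A.indicator (fun _ => (1:ℝ)) x ∈ Icc (0:ℝ) 1 := by
  by_cases h : x ∈ A <;> simp [indicator_of_mem, indicator_of_notMem, h]

lemma ofReal_integral_indicator {μ : Measure X} [IsFiniteMeasure μ] {A : Set X}
    (hA : MeasurableSet A) :
    ENNReal.ofReal (∫ x, A.indicator (fun _ => (1:ℝ)) x ∂μ) = μ A := by
  rw [integral_indicator_const (1:ℝ) hA]
  simp [ENNReal.ofReal_toReal (measure_ne_top μ A)]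

lemma indicator_feasible {Z : Set (X × Y)} {A : Set X} {B : Set Y}
    (hcov : Z ⊆ (A ×ˢ (univ : Set Y)) ∪ ((univ : Set X) ×ˢ B)) :
    ∀ p ∈ Z, 1 ≤ A.indicator (fun _ => (1:ℝ)) p.1 + B.indicator (fun _ => (1:ℝ)) p.2 := by
  intro p hp
  rcases hcov hp with h | h
  · rw [indicator_of_mem h.1]
    have := (indicator_mem_Icc B p.2).1
    linarith
  · rw [indicator_of_mem h.2]
    have := (indicator_mem_Icc A p.1).1
    linarith

lemma fInf_le_pair {μ : Measure X} {ν : Measure Y} (W : Set (X × Y)) {a : X → ℝ} {b : Y → ℝ}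
    (ha : Measurable a) (hb : Measurable b)
    (haI : ∀ x, a x ∈ Icc (0:ℝ) 1) (hbI : ∀ y, b y ∈ Icc (0:ℝ) 1)
    (hfeas : ∀ p ∈ W, 1 ≤ a p.1 + b p.2) :
    fInf μ ν W ≤ ENNReal.ofReal (∫ x, a x ∂μ) + ENNReal.ofReal (∫ y, b y ∂ν) :=
  iInf_le_of_le a <| iInf_le_of_le b <| iInf_le_of_le ha <| iInf_le_of_le hb <|
    iInf_le_of_le haI <| iInf_le_of_le hbI <| iInf_le_of_le hfeas le_rfl

lemma gInf_le_pair {μ : Measure X} {ν : Measure Y} (Z : Set (X × Y)) {a : X → ℝ} {b : Y → ℝ}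
    (ha : Measurable a) (hb : Measurable b)
    (haI : ∀ x, a x ∈ Icc (0:ℝ) 1) (hbI : ∀ y, b y ∈ Icc (0:ℝ) 1)
    (hfeas : ∀ᵐ p ∂μ.prod ν, p ∈ Z → 1 ≤ a p.1 + b p.2) :
    gInf μ ν Z ≤ ENNReal.ofReal (∫ x, a x ∂μ) + ENNReal.ofReal (∫ y, b y ∂ν) :=
  iInf_le_of_le a <| iInf_le_of_le b <| iInf_le_of_le ha <| iInf_le_of_le hb <|
    iInf_le_of_le haI <| iInf_le_of_le hbI <| iInf_le_of_le hfeas le_rfl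

lemma fInf_le_sthi (μ : Measure X) (ν : Measure Y) [IsFiniteMeasure μ] [IsFiniteMeasure ν]
    (Z : Set (X × Y)) : fInf μ ν Z ≤ sthi μ ν Z := by
  refine le_iInf fun A => le_iInf fun B => le_iInf fun hA => le_iInf fun hB =>
    le_iInf fun hcov => ?_
  have := fInf_le_pair (μ := μ) (ν := ν) Z
    ((measurable_const (a := (1:ℝ))).indicator hA) ((measurable_const (a := (1:ℝ))).indicator hB)
    (indicator_mem_Icc A) (indicator_mem_Icc B) (indicator_feasible hcov)
  rwa [ofReal_integral_indicator hA, ofReal_integral_indicator hB] at this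

lemma gInf_le_thi (μ : Measure X) (ν : Measure Y) [IsFiniteMeasure μ] [IsFiniteMeasure ν]
    (Z : Set (X × Y)) : gInf μ ν Z ≤ thi μ ν Z := by
  refine le_iInf fun A => le_iInf fun B => le_iInf fun hA => le_iInf fun hB =>
    le_iInf fun hnull => ?_
  have hfeas : ∀ᵐ p ∂μ.prod ν, p ∈ Z →
      1 ≤ A.indicator (fun _ => (1:ℝ)) p.1 + B.indicator (fun _ => (1:ℝ)) p.2 := by
    have h1 : ∀ᵐ p ∂μ.prod ν,
        p ∉ Z \ ((A ×ˢ (univ : Set Y)) ∪ ((univ : Set X) ×ˢ B)) :=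
      measure_eq_zero_iff_ae_notMem.1 hnull
    filter_upwards [h1] with p hp hpZ
    have hpc : p ∈ (A ×ˢ (univ : Set Y)) ∪ ((univ : Set X) ×ˢ B) := by
      by_contra hc; exact hp ⟨hpZ, hc⟩
    rcases hpc with h | h
    · rw [indicator_of_mem h.1]
      have := (indicator_mem_Icc (X := Y) B p.2).1
      linarith
    · rw [indicator_of_mem h.2]
      have := (indicator_mem_Icc (X := X) A p.1).1
      linarith
  have := gInf_le_pair (μ := μ) (ν := ν) Z
    ((measurable_const (a := (1:ℝ))).indicator hA) ((measurable_const (a := (1:ℝ))).indicator hB)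
    (indicator_mem_Icc A) (indicator_mem_Icc B) hfeas
  rwa [ofReal_integral_indicator hA, ofReal_integral_indicator hB] at this



lemma enn_min_add_max (a b : ℝ≥0∞) : min a b + max a b = a + b := by
  rcases le_total a b with h | h
  · rw [min_eq_left h, max_eq_right h]
  · rw [min_eq_right h, max_eq_left h, add_comm]

lemma lintegral_min_add_max {μ : Measure X} {u w : X → ℝ≥0∞}
    (hu : Measurable u) (hw : Measurable w) :
    (∫⁻ x, min (u x) (w x) ∂μ) + (∫⁻ x, max (u x) (w x) ∂μ)
      = (∫⁻ x, u x ∂μ) + (∫⁻ x, w x ∂μ) := by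
  rw [← lintegral_add_left (hu.min hw), ← lintegral_add_left hu]
  exact lintegral_congr fun x => enn_min_add_max _ _

noncomputable def seqMin (f : ℕ → X → ℝ≥0∞) (N : ℕ) : ℕ → X → ℝ≥0∞
  | 0 => f N
  | (k+1) => fun x => min (seqMin f N k x) (f (N+k+1) x)

noncomputable def seqMax (g : ℕ → Y → ℝ≥0∞) (N : ℕ) : ℕ → Y → ℝ≥0∞
  | 0 => g N
  | (k+1) => fun y => max (seqMax g N k y) (g (N+k+1) y)

lemma seqMin_measurable {f : ℕ → X → ℝ≥0∞} (hf : ∀ n, Measurable (f n)) (N k : ℕ) :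
    Measurable (seqMin f N k) := by
  induction k with
  | zero => exact hf N
  | succ k ih => exact ih.min (hf _)

lemma seqMax_measurable {g : ℕ → Y → ℝ≥0∞} (hg : ∀ n, Measurable (g n)) (N k : ℕ) :
    Measurable (seqMax g N k) := by
  induction k with
  | zero => exact hg N
  | succ k ih => exact ih.max (hg _)

lemma seqMin_le_one {f : ℕ → X → ℝ≥0∞} (hf : ∀ n x, f n x ≤ 1) (N k : ℕ) (x : X) :
    seqMin f N k x ≤ 1 := by
  induction k with
  | zero => exact hf N x
  | succ k ih => exact le_trans (min_le_left _ _) ih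

lemma seqMax_le_one {g : ℕ → Y → ℝ≥0∞} (hg : ∀ n y, g n y ≤ 1) (N k : ℕ) (y : Y) :
    seqMax g N k y ≤ 1 := by
  induction k with
  | zero => exact hg N y
  | succ k ih => exact max_le ih (hg _ y)

lemma seqMin_succ_eq {f : ℕ → X → ℝ≥0∞} (N k : ℕ) (x : X) :
    seqMin f N (k+1) x = min (f N x) (seqMin f (N+1) k x) := by
  induction k with
  | zero =>
    show min (seqMin f N 0 x) (f (N+0+1) x) = min (f N x) (seqMin f (N+1) 0 x)
    rfl
  | succ k ih =>
    show min (seqMin f N (k+1) x) (f (N+(k+1)+1) x) = min (f N x) (min (seqMin f (N+1) k x) (f ((N+1)+k+1) x))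
    rw [ih, min_assoc, show N+(k+1)+1 = (N+1)+k+1 from by omega]

lemma seqMax_succ_eq {g : ℕ → Y → ℝ≥0∞} (N k : ℕ) (y : Y) :
    seqMax g N (k+1) y = max (g N y) (seqMax g (N+1) k y) := by
  induction k with
  | zero =>
    show max (seqMax g N 0 y) (g (N+0+1) y) = max (g N y) (seqMax g (N+1) 0 y)
    rfl
  | succ k ih =>
    show max (seqMax g N (k+1) y) (g (N+(k+1)+1) y) = max (g N y) (max (seqMax g (N+1) k y) (g ((N+1)+k+1) y))
    rw [ih, max_assoc, show N+(k+1)+1 = (N+1)+k+1 from by omega]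

lemma geom_sum_le_two (m : ℕ) : (∑ j ∈ Finset.range m, (2⁻¹ : ℝ≥0∞) ^ j) ≤ 2 := by
  calc (∑ j ∈ Finset.range m, (2⁻¹ : ℝ≥0∞) ^ j) ≤ ∑' j, (2⁻¹ : ℝ≥0∞) ^ j :=
        ENNReal.sum_le_tsum _
    _ = 2 := by rw [ENNReal.tsum_geometric, ENNReal.one_sub_inv_two, inv_inv]

lemma eInf_attained (μ : Measure X) (ν : Measure Y)
    [IsProbabilityMeasure μ] [IsProbabilityMeasure ν] (W : Set (X × Y)) :
    ∃ f g, Measurable f ∧ Measurable g ∧ (∀ x, f x ≤ 1) ∧ (∀ y, g y ≤ 1) ∧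
      (∀ p ∈ W, 1 ≤ f p.1 + g p.2) ∧
      (∫⁻ x, f x ∂μ) + (∫⁻ y, g y ∂ν) = eInf μ ν W := by
  set v := eInf μ ν W with hv
  have hvtop : v ≠ ⊤ := ((eInf_le_two μ ν W).trans_lt (by norm_num)).ne
  have hex : ∀ n : ℕ, ∃ f g, Measurable f ∧ Measurable g ∧ (∀ x, f x ≤ 1) ∧ (∀ y, g y ≤ 1) ∧
      (∀ p ∈ W, 1 ≤ f p.1 + g p.2) ∧
      (∫⁻ x, f x ∂μ) + (∫⁻ y, g y ∂ν) < v + (2⁻¹ : ℝ≥0∞) ^ n := by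
    intro n
    have hlt : eInf μ ν W < v + (2⁻¹ : ℝ≥0∞) ^ n := by
      rw [← hv]
      exact ENNReal.lt_add_right hvtop (pow_ne_zero n (by norm_num))
    simp only [eInf, iInf_lt_iff] at hlt
    obtain ⟨f, g, hf, hg, hf1, hg1, hfeas, hval⟩ := hlt
    exact ⟨f, g, hf, hg, hf1, hg1, hfeas, hval⟩
  choose f g hf hg hf1 hg1 hfeas hval using hex
  have hCmeas : ∀ N k, Measurable (seqMin f N k) := fun N k => seqMin_measurable hf N k
  have hDmeas : ∀ N k, Measurable (seqMax g N k) := fun N k => seqMax_measurable hg N k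
  have hC1 : ∀ N k x, seqMin f N k x ≤ 1 := fun N k x => seqMin_le_one (fun n x => hf1 n x) N k x
  have hD1 : ∀ N k y, seqMax g N k y ≤ 1 := fun N k y => seqMax_le_one (fun n y => hg1 n y) N k y
  have key : ∀ N k, (∀ p ∈ W, 1 ≤ seqMin f N k p.1 + seqMax g N k p.2) ∧
      (∫⁻ x, seqMin f N k x ∂μ) + (∫⁻ y, seqMax g N k y ∂ν)
        ≤ v + ∑ j ∈ Finset.range (k+1), (2⁻¹:ℝ≥0∞)^(N+j) := by
    intro N k
    induction k with
    | zero =>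
      refine ⟨hfeas N, ?_⟩
      have := (hval N).le
      simpa [Finset.sum_range_one, seqMin, seqMax] using this
    | succ k ih =>
      obtain ⟨ihfeas, ihval⟩ := ih
      have hcombo2feas : ∀ p ∈ W,
          1 ≤ max (seqMin f N k p.1) (f (N+k+1) p.1) + min (seqMax g N k p.2) (g (N+k+1) p.2) := by
        intro p hp
        rcases le_total (seqMax g N k p.2) (g (N+k+1) p.2) with h | h
        · rw [min_eq_left h]
          exact (ihfeas p hp).trans (add_le_add (le_max_left _ _) le_rfl)
        · rw [min_eq_right h]
          exact (hfeas _ p hp).trans (add_le_add (le_max_right _ _) le_rfl)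
      constructor
      · intro p hp
        show 1 ≤ min (seqMin f N k p.1) (f (N+k+1) p.1) + max (seqMax g N k p.2) (g (N+k+1) p.2)
        rcases le_total (seqMin f N k p.1) (f (N+k+1) p.1) with h | h
        · rw [min_eq_left h]
          exact (ihfeas p hp).trans (add_le_add le_rfl (le_max_left _ _))
        · rw [min_eq_right h]
          exact (hfeas _ p hp).trans (add_le_add le_rfl (le_max_right _ _))
      · have hv2 : v ≤ (∫⁻ x, max (seqMin f N k x) (f (N+k+1) x) ∂μ)
            + (∫⁻ y, min (seqMax g N k y) (g (N+k+1) y) ∂ν) :=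
          eInf_le μ ν W ((hCmeas N k).max (hf _)) ((hDmeas N k).min (hg _))
            (fun x => max_le (hC1 N k x) (hf1 _ x))
            (fun y => le_trans (min_le_left _ _) (hD1 N k y)) hcombo2feas
        have hid1 := lintegral_min_add_max (μ := μ) (hCmeas N k) (hf (N+k+1))
        have hid2 := lintegral_min_add_max (μ := ν) (hDmeas N k) (hg (N+k+1))
        set P := ∫⁻ x, min (seqMin f N k x) (f (N+k+1) x) ∂μ with hP
        set Q := ∫⁻ y, max (seqMax g N k y) (g (N+k+1) y) ∂ν with hQ
        set P' := ∫⁻ x, max (seqMin f N k x) (f (N+k+1) x) ∂μ with hP'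
        set Q' := ∫⁻ y, min (seqMax g N k y) (g (N+k+1) y) ∂ν with hQ'
        have hsum : (P + Q) + (P' + Q')
            = ((∫⁻ x, seqMin f N k x ∂μ) + (∫⁻ y, seqMax g N k y ∂ν))
              + ((∫⁻ x, f (N+k+1) x ∂μ) + (∫⁻ y, g (N+k+1) y ∂ν)) := by
          have h1 : P + P' = (∫⁻ x, seqMin f N k x ∂μ) + (∫⁻ x, f (N+k+1) x ∂μ) := hid1
          have h2 : Q' + Q = (∫⁻ y, seqMax g N k y ∂ν) + (∫⁻ y, g (N+k+1) y ∂ν) := hid2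
          calc (P + Q) + (P' + Q') = (P + P') + (Q' + Q) := by ring
            _ = _ := by rw [h1, h2]; ring
        have hstep : (P + Q) + v
            ≤ (v + ∑ j ∈ Finset.range (k+1+1), (2⁻¹:ℝ≥0∞)^(N+j)) + v := by
          calc (P + Q) + v ≤ (P + Q) + (P' + Q') := add_le_add le_rfl hv2
            _ = _ := hsum
            _ ≤ (v + ∑ j ∈ Finset.range (k+1), (2⁻¹:ℝ≥0∞)^(N+j)) + (v + (2⁻¹:ℝ≥0∞)^(N+(k+1))) :=
                add_le_add ihval (hval _).le
            _ = (v + ∑ j ∈ Finset.range (k+1+1), (2⁻¹:ℝ≥0∞)^(N+j)) + v := by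
                conv_rhs => rw [Finset.sum_range_succ]
                ring
        exact (ENNReal.add_le_add_iff_right hvtop).1 hstep
  -- the monotone limits
  have hAmeas : ∀ N, Measurable (fun x => ⨅ k, seqMin f N k x) :=
    fun N => Measurable.iInf (hCmeas N)
  have hBmeas : ∀ N, Measurable (fun y => ⨆ k, seqMax g N k y) :=
    fun N => Measurable.iSup (hDmeas N)
  have hA1 : ∀ N x, (⨅ k, seqMin f N k x) ≤ 1 := fun N x => (iInf_le _ 0).trans (hC1 N 0 x)
  have hB1 : ∀ N y, (⨆ k, seqMax g N k y) ≤ 1 := fun N y => iSup_le fun k => hD1 N k y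
  have hABfeas : ∀ N, ∀ p ∈ W, 1 ≤ (⨅ k, seqMin f N k p.1) + ⨆ k, seqMax g N k p.2 := by
    intro N p hp
    have h1 : ∀ k, 1 ≤ seqMin f N k p.1 + ⨆ k', seqMax g N k' p.2 := fun k =>
      ((key N k).1 p hp).trans (add_le_add le_rfl (le_iSup (fun k' => seqMax g N k' p.2) k))
    calc (1:ℝ≥0∞) ≤ ⨅ k, (seqMin f N k p.1 + ⨆ k', seqMax g N k' p.2) := le_iInf h1
      _ = (⨅ k, seqMin f N k p.1) + ⨆ k', seqMax g N k' p.2 := ENNReal.iInf_add.symm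
  have hAmono : Monotone (fun N => (fun x => ⨅ k, seqMin f N k x)) := by
    refine monotone_nat_of_le_succ fun N x => ?_
    refine le_iInf fun k => ?_
    refine (iInf_le (fun k => seqMin f N k x) (k+1)).trans ?_
    rw [seqMin_succ_eq]
    exact min_le_right _ _
  have hBanti : Antitone (fun N => (fun y => ⨆ k, seqMax g N k y)) := by
    refine antitone_nat_of_succ_le fun N y => ?_
    refine iSup_le fun k => ?_
    refine le_trans ?_ (le_iSup (fun k => seqMax g N k y) (k+1))
    rw [seqMax_succ_eq]
    exact le_max_right _ _
  have hXY : ∀ N, (∫⁻ x, (⨅ k, seqMin f N k x) ∂μ) + (∫⁻ y, (⨆ k, seqMax g N k y) ∂ν)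
      ≤ v + (2⁻¹:ℝ≥0∞)^N * 2 := by
    intro N
    have hBsup : (∫⁻ y, (⨆ k, seqMax g N k y) ∂ν) = ⨆ k, ∫⁻ y, seqMax g N k y ∂ν :=
      lintegral_iSup (hDmeas N) (monotone_nat_of_le_succ fun k y => le_max_left _ _)
    rw [hBsup, ENNReal.add_iSup]
    refine iSup_le fun k => ?_
    have hsumb : (∑ j ∈ Finset.range (k+1), (2⁻¹:ℝ≥0∞)^(N+j)) ≤ (2⁻¹:ℝ≥0∞)^N * 2 := by
      simp_rw [pow_add]
      rw [← Finset.mul_sum]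
      exact mul_le_mul_right (geom_sum_le_two _) _
    calc (∫⁻ x, (⨅ k, seqMin f N k x) ∂μ) + ∫⁻ y, seqMax g N k y ∂ν
        ≤ (∫⁻ x, seqMin f N k x ∂μ) + ∫⁻ y, seqMax g N k y ∂ν :=
          add_le_add (lintegral_mono fun x => iInf_le _ k) le_rfl
      _ ≤ v + ∑ j ∈ Finset.range (k+1), (2⁻¹:ℝ≥0∞)^(N+j) := (key N k).2
      _ ≤ v + (2⁻¹:ℝ≥0∞)^N * 2 := add_le_add le_rfl hsumb
  refine ⟨fun x => ⨆ N, ⨅ k, seqMin f N k x, fun y => ⨅ N, ⨆ k, seqMax g N k y,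
    Measurable.iSup hAmeas, Measurable.iInf hBmeas,
    fun x => iSup_le fun N => hA1 N x, fun y => (iInf_le _ 0).trans (hB1 0 y), ?_, ?_⟩
  · intro p hp
    calc (1:ℝ≥0∞) ≤ ⨅ N, ((⨆ N', ⨅ k, seqMin f N' k p.1) + ⨆ k, seqMax g N k p.2) := by
          refine le_iInf fun N => ?_
          exact (hABfeas N p hp).trans
            (add_le_add (le_iSup (fun N' => ⨅ k, seqMin f N' k p.1) N) le_rfl)
      _ = (⨆ N', ⨅ k, seqMin f N' k p.1) + ⨅ N, ⨆ k, seqMax g N k p.2 := ENNReal.add_iInf.symm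
  · have hXsup : (∫⁻ x, (⨆ N, ⨅ k, seqMin f N k x) ∂μ)
        = ⨆ N, ∫⁻ x, (⨅ k, seqMin f N k x) ∂μ :=
      lintegral_iSup hAmeas hAmono
    have hYinf : (∫⁻ y, (⨅ N, ⨆ k, seqMax g N k y) ∂ν)
        = ⨅ N, ∫⁻ y, (⨆ k, seqMax g N k y) ∂ν := by
      refine lintegral_iInf hBmeas hBanti ?_
      refine ne_of_lt (lt_of_le_of_lt ?_ (by norm_num : (1:ℝ≥0∞) < ⊤))
      calc (∫⁻ y, (⨆ k, seqMax g 0 k y) ∂ν) ≤ ∫⁻ _, 1 ∂ν := lintegral_mono (hB1 0)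
        _ = 1 := by simp
    have hVle : ∀ M : ℕ, (∫⁻ x, (⨆ N, ⨅ k, seqMin f N k x) ∂μ)
        + (∫⁻ y, (⨅ N, ⨆ k, seqMax g N k y) ∂ν) ≤ v + (2⁻¹:ℝ≥0∞)^M * 2 := by
      intro M
      rw [hXsup, hYinf, ENNReal.iSup_add]
      refine iSup_le fun N => ?_
      calc (∫⁻ x, (⨅ k, seqMin f N k x) ∂μ) + ⨅ N', ∫⁻ y, (⨆ k, seqMax g N' k y) ∂ν
          ≤ (∫⁻ x, (⨅ k, seqMin f (max N M) k x) ∂μ)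
            + ∫⁻ y, (⨆ k, seqMax g (max N M) k y) ∂ν :=
            add_le_add (lintegral_mono fun x => hAmono (le_max_left N M) x)
              (iInf_le _ (max N M))
        _ ≤ v + (2⁻¹:ℝ≥0∞)^(max N M) * 2 := hXY _
        _ ≤ v + (2⁻¹:ℝ≥0∞)^M * 2 := by
            refine add_le_add le_rfl (mul_le_mul_left ?_ 2)
            exact pow_le_pow_of_le_one zero_le (by norm_num) (le_max_right N M)
    have hVv : (∫⁻ x, (⨆ N, ⨅ k, seqMin f N k x) ∂μ)
        + (∫⁻ y, (⨅ N, ⨆ k, seqMax g N k y) ∂ν) ≤ v := by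
      refine ENNReal.le_of_forall_pos_le_add fun ε hε _ => ?_
      have htend : Tendsto (fun M : ℕ => (2⁻¹:ℝ≥0∞)^M * 2) atTop (nhds 0) := by
        have h0 := ENNReal.tendsto_pow_atTop_nhds_zero_of_lt_one
          (by norm_num : (2⁻¹:ℝ≥0∞) < 1)
        simpa using ENNReal.Tendsto.mul_const h0 (Or.inr (by norm_num : (2:ℝ≥0∞) ≠ ⊤))
      have hev : ∀ᶠ M in atTop, (2⁻¹:ℝ≥0∞)^M * 2 < (ε:ℝ≥0∞) :=
        htend.eventually_lt_const (by exact_mod_cast hε)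
      obtain ⟨M, hM⟩ := hev.exists
      exact (hVle M).trans (add_le_add le_rfl hM.le)
    refine le_antisymm hVv ?_
    rw [hv]
    refine eInf_le μ ν W (Measurable.iSup hAmeas) (Measurable.iInf hBmeas)
      (fun x => iSup_le fun N => hA1 N x) (fun y => (iInf_le _ 0).trans (hB1 0 y)) ?_
    intro p hp
    calc (1:ℝ≥0∞) ≤ ⨅ N, ((⨆ N', ⨅ k, seqMin f N' k p.1) + ⨆ k, seqMax g N k p.2) := by
          refine le_iInf fun N => ?_
          exact (hABfeas N p hp).trans
            (add_le_add (le_iSup (fun N' => ⨅ k, seqMin f N' k p.1) N) le_rfl)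
      _ = (⨆ N', ⨅ k, seqMin f N' k p.1) + ⨅ N, ⨆ k, seqMax g N k p.2 := ENNReal.add_iInf.symm

lemma toReal_Icc {f : X → ℝ≥0∞} (hf1 : ∀ x, f x ≤ 1) (x : X) :
    (f x).toReal ∈ Icc (0:ℝ) 1 :=
  ⟨ENNReal.toReal_nonneg, by simpa using ENNReal.toReal_mono (by norm_num) (hf1 x)⟩

lemma toReal_feas {W : Set (X × Y)} {f : X → ℝ≥0∞} {g : Y → ℝ≥0∞}
    (hf1 : ∀ x, f x ≤ 1) (hg1 : ∀ y, g y ≤ 1)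
    (hfeas : ∀ p ∈ W, 1 ≤ f p.1 + g p.2) :
    ∀ p ∈ W, 1 ≤ (f p.1).toReal + (g p.2).toReal := by
  intro p hp
  have hfx : f p.1 ≠ ⊤ := (lt_of_le_of_lt (hf1 p.1) (by norm_num)).ne
  have hgy : g p.2 ≠ ⊤ := (lt_of_le_of_lt (hg1 p.2) (by norm_num)).ne
  have : ((1:ℝ≥0∞)).toReal ≤ (f p.1 + g p.2).toReal :=
    ENNReal.toReal_mono (by simp [ENNReal.add_ne_top, hfx, hgy]) (hfeas p hp)
  simpa [ENNReal.toReal_add hfx hgy] using this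

lemma ofReal_integral_toReal {μ : Measure X} [IsFiniteMeasure μ] {f : X → ℝ≥0∞}
    (hf : Measurable f) (hf1 : ∀ x, f x ≤ 1) :
    ENNReal.ofReal (∫ x, (f x).toReal ∂μ) = ∫⁻ x, f x ∂μ := by
  rw [ofReal_integral_eq hf.ennreal_toReal (toReal_Icc hf1)]
  exact lintegral_congr fun x =>
    ENNReal.ofReal_toReal ((lt_of_le_of_lt (hf1 x) (by norm_num)).ne)

lemma fInf_attained (μ : Measure X) (ν : Measure Y)
    [IsProbabilityMeasure μ] [IsProbabilityMeasure ν] (W : Set (X × Y)) :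
    ∃ a b, Measurable a ∧ Measurable b ∧ (∀ x, a x ∈ Icc (0:ℝ) 1) ∧
      (∀ y, b y ∈ Icc (0:ℝ) 1) ∧ (∀ p ∈ W, 1 ≤ a p.1 + b p.2) ∧
      fInf μ ν W = ENNReal.ofReal (∫ x, a x ∂μ) + ENNReal.ofReal (∫ y, b y ∂ν) := by
  obtain ⟨f, g, hf, hg, hf1, hg1, hfeas, hval⟩ := eInf_attained μ ν W
  refine ⟨fun x => (f x).toReal, fun y => (g y).toReal, hf.ennreal_toReal, hg.ennreal_toReal,
    toReal_Icc hf1, toReal_Icc hg1, toReal_feas hf1 hg1 hfeas, ?_⟩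
  rw [ofReal_integral_toReal hf hf1, ofReal_integral_toReal hg hg1, hval,
    fInf_eq_eInf]

lemma sthi_eq_fInf (μ : Measure X) (ν : Measure Y)
    [IsProbabilityMeasure μ] [IsProbabilityMeasure ν] (Z : Set (X × Y)) :
    sthi μ ν Z = fInf μ ν Z := by
  refine le_antisymm ?_ (fInf_le_sthi μ ν Z)
  refine le_iInf fun a => le_iInf fun b => le_iInf fun ha => le_iInf fun hb =>
    le_iInf fun haI => le_iInf fun hbI => le_iInf fun hfeas => ?_
  exact sthi_le_of_feasible ha hb haI hbI hfeas

lemma thi_eq_gInf (μ : Measure X) (ν : Measure Y)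
    [IsProbabilityMeasure μ] [IsProbabilityMeasure ν] (Z : Set (X × Y)) :
    thi μ ν Z = gInf μ ν Z := by
  refine le_antisymm ?_ (gInf_le_thi μ ν Z)
  refine le_iInf fun a => le_iInf fun b => le_iInf fun ha => le_iInf fun hb =>
    le_iInf fun haI => le_iInf fun hbI => le_iInf fun hfeas => ?_
  exact thi_le_of_aefeasible ha hb haI hbI hfeas

lemma gInf_attained (μ : Measure X) (ν : Measure Y)
    [IsProbabilityMeasure μ] [IsProbabilityMeasure ν] (Z : Set (X × Y)) :
    ∃ a b, Measurable a ∧ Measurable b ∧ (∀ x, a x ∈ Icc (0:ℝ) 1) ∧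
      (∀ y, b y ∈ Icc (0:ℝ) 1) ∧ (∀ᵐ p ∂μ.prod ν, p ∈ Z → 1 ≤ a p.1 + b p.2) ∧
      gInf μ ν Z = ENNReal.ofReal (∫ x, a x ∂μ) + ENNReal.ofReal (∫ y, b y ∂ν) := by
  have hgtop : gInf μ ν Z ≠ ⊤ := by
    have h2 : gInf μ ν Z ≤ ENNReal.ofReal (∫ _, (1:ℝ) ∂μ) + ENNReal.ofReal (∫ _, (1:ℝ) ∂ν) :=
      gInf_le_pair Z measurable_const measurable_const
        (fun _ => ⟨zero_le_one, le_rfl⟩) (fun _ => ⟨zero_le_one, le_rfl⟩)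
        (ae_of_all _ fun p _ => by norm_num)
    simp only [integral_const, measure_univ, ENNReal.toReal_one, smul_eq_mul, one_mul,
      ENNReal.ofReal_one] at h2
    exact (h2.trans_lt (by norm_num)).ne
  have hex : ∀ n : ℕ, ∃ a b, Measurable a ∧ Measurable b ∧ (∀ x, a x ∈ Icc (0:ℝ) 1) ∧
      (∀ y, b y ∈ Icc (0:ℝ) 1) ∧ (∀ᵐ p ∂μ.prod ν, p ∈ Z → 1 ≤ a p.1 + b p.2) ∧
      ENNReal.ofReal (∫ x, a x ∂μ) + ENNReal.ofReal (∫ y, b y ∂ν)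
        < gInf μ ν Z + (2⁻¹ : ℝ≥0∞) ^ n := by
    intro n
    have hlt : gInf μ ν Z < gInf μ ν Z + (2⁻¹ : ℝ≥0∞) ^ n :=
      ENNReal.lt_add_right hgtop (pow_ne_zero n (by norm_num))
    conv_lhs at hlt => rw [gInf]
    simp only [iInf_lt_iff] at hlt
    obtain ⟨a, b, ha, hb, haI, hbI, hfeas, hval⟩ := hlt
    exact ⟨a, b, ha, hb, haI, hbI, hfeas, hval⟩
  choose a b ha hb haI hbI hfeas hval using hex
  set Wn : ℕ → Set (X × Y) := fun n => Z ∩ {p | 1 ≤ a n p.1 + b n p.2} with hWn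
  set W : Set (X × Y) := ⋂ n, Wn n with hW
  have hnull : (μ.prod ν) (Z \ W) = 0 := by
    rw [hW, diff_iInter]
    refine measure_iUnion_null fun n => ?_
    have : Z \ Wn n ⊆ {p : X × Y | ¬(p ∈ Z → 1 ≤ a n p.1 + b n p.2)} := by
      rintro p ⟨hpZ, hpn⟩
      intro himp
      exact hpn ⟨hpZ, himp hpZ⟩
    exact measure_mono_null this (hfeas n)
  have hfw : fInf μ ν W ≤ gInf μ ν Z := by
    refine ENNReal.le_of_forall_pos_le_add fun ε hε _ => ?_
    have htend : Tendsto (fun n : ℕ => (2⁻¹:ℝ≥0∞)^n) atTop (nhds 0) :=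
      ENNReal.tendsto_pow_atTop_nhds_zero_of_lt_one (by norm_num : (2⁻¹:ℝ≥0∞) < 1)
    obtain ⟨n, hn⟩ := (htend.eventually_lt_const
      (show (0:ℝ≥0∞) < (ε:ℝ≥0∞) by exact_mod_cast hε)).exists
    have hfeasW : ∀ p ∈ W, 1 ≤ a n p.1 + b n p.2 := by
      intro p hp
      exact (mem_iInter.1 hp n).2
    refine (fInf_le_pair W (ha n) (hb n) (haI n) (hbI n) hfeasW).trans ?_
    exact ((hval n).le).trans (add_le_add le_rfl hn.le)
  have hgf : gInf μ ν Z ≤ fInf μ ν W := by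
    refine le_iInf fun a' => le_iInf fun b' => le_iInf fun ha' => le_iInf fun hb' =>
      le_iInf fun haI' => le_iInf fun hbI' => le_iInf fun hfeas' => ?_
    refine gInf_le_pair Z ha' hb' haI' hbI' ?_
    have h1 : ∀ᵐ p ∂μ.prod ν, p ∉ Z \ W := measure_eq_zero_iff_ae_notMem.1 hnull
    filter_upwards [h1] with p hp hpZ
    have hpW : p ∈ W := by
      by_contra hc; exact hp ⟨hpZ, hc⟩
    exact hfeas' p hpW
  have heq : gInf μ ν Z = fInf μ ν W := le_antisymm hgf hfw
  obtain ⟨a', b', ha', hb', haI', hbI', hfeas', hval'⟩ := fInf_attained μ ν W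
  refine ⟨a', b', ha', hb', haI', hbI', ?_, by rw [heq, hval']⟩
  have h1 : ∀ᵐ p ∂μ.prod ν, p ∉ Z \ W := measure_eq_zero_iff_ae_notMem.1 hnull
  filter_upwards [h1] with p hp hpZ
  have hpW : p ∈ W := by
    by_contra hc; exact hp ⟨hpZ, hc⟩
  exact hfeas' p hpW

end ThicknessAux

/-- The distance `τ` between two measurable functions on a product space. -/
noncomputable def tauDist (μ : Measure X) (ν : Measure Y) (f g : X × Y → ℝ) : ℝ :=
  sInf {ε : ℝ | 0 < ε ∧ thi μ ν {p : X × Y | ε < |f p - g p|} ≤ ENNReal.ofReal ε}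

/-- The `SR¹`-norm of a measurable function on a product space. -/
noncomputable def srNorm (μ : Measure X) (ν : Measure Y) (f : X × Y → ℝ) : ℝ≥0∞ :=
  ⨅ (a : X → ℝ) (b : Y → ℝ) (_ : Measurable a) (_ : Measurable b)
    (_ : ∀ x, 0 ≤ a x) (_ : ∀ y, 0 ≤ b y)
    (_ : ∀ᵐ p ∂μ.prod ν, |f p| ≤ a p.1 + b p.2),
    (∫⁻ x, ENNReal.ofReal (a x) ∂μ) + (∫⁻ y, ENNReal.ofReal (b y) ∂ν)


/-- the (proper) thickness of a measurable set `Z ⊆ X × Y` is the infimum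
of `∫ a dμ + ∫ b dν` over measurable `a : X → [0,1]`, `b : Y → [0,1]` with
`a(x) + b(y) ≥ χ_Z(x,y)` (everywhere for proper thickness, almost everywhere for
thickness), and both infima are attained. -/
theorem thickness_duality
    [StandardBorelSpace X] [StandardBorelSpace Y]
    (μ : Measure X) (ν : Measure Y)
    [IsProbabilityMeasure μ] [IsProbabilityMeasure ν] [NullSingletonClass μ] [NullSingletonClass ν]
    (Z : Set (X × Y)) (hZ : MeasurableSet Z) :
    (sthi μ ν Z =
      ⨅ (a : X → ℝ) (b : Y → ℝ) (_ : Measurable a) (_ : Measurable b)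
        (_ : ∀ x, a x ∈ Icc (0:ℝ) 1) (_ : ∀ y, b y ∈ Icc (0:ℝ) 1)
        (_ : ∀ p ∈ Z, 1 ≤ a p.1 + b p.2),
        ENNReal.ofReal (∫ x, a x ∂μ) + ENNReal.ofReal (∫ y, b y ∂ν)) ∧
    (thi μ ν Z =
      ⨅ (a : X → ℝ) (b : Y → ℝ) (_ : Measurable a) (_ : Measurable b)
        (_ : ∀ x, a x ∈ Icc (0:ℝ) 1) (_ : ∀ y, b y ∈ Icc (0:ℝ) 1)
        (_ : ∀ᵐ p ∂μ.prod ν, p ∈ Z → 1 ≤ a p.1 + b p.2),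
        ENNReal.ofReal (∫ x, a x ∂μ) + ENNReal.ofReal (∫ y, b y ∂ν)) ∧
    (∃ (a : X → ℝ) (b : Y → ℝ), Measurable a ∧ Measurable b ∧
      (∀ x, a x ∈ Icc (0:ℝ) 1) ∧ (∀ y, b y ∈ Icc (0:ℝ) 1) ∧
      (∀ p ∈ Z, 1 ≤ a p.1 + b p.2) ∧
      sthi μ ν Z = ENNReal.ofReal (∫ x, a x ∂μ) + ENNReal.ofReal (∫ y, b y ∂ν)) ∧
    (∃ (a : X → ℝ) (b : Y → ℝ), Measurable a ∧ Measurable b ∧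
      (∀ x, a x ∈ Icc (0:ℝ) 1) ∧ (∀ y, b y ∈ Icc (0:ℝ) 1) ∧
      (∀ᵐ p ∂μ.prod ν, p ∈ Z → 1 ≤ a p.1 + b p.2) ∧
      thi μ ν Z = ENNReal.ofReal (∫ x, a x ∂μ) + ENNReal.ofReal (∫ y, b y ∂ν)) := by
  refine ⟨sthi_eq_fInf μ ν Z, thi_eq_gInf μ ν Z, ?_, ?_⟩
  · obtain ⟨a, b, ha, hb, haI, hbI, hfeas, hval⟩ := fInf_attained μ ν Z
    exact ⟨a, b, ha, hb, haI, hbI, hfeas, (sthi_eq_fInf μ ν Z).trans hval⟩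
  · obtain ⟨a, b, ha, hb, haI, hbI, hfeas, hval⟩ := gInf_attained μ ν Z
    exact ⟨a, b, ha, hb, haI, hbI, hfeas, (thi_eq_gInf μ ν Z).trans hval⟩


end VirtCont
end

section
/- Let (X, μ) and (Y, ν) be standard probability spaces and let {Z_n} be an increasing sequence of measurable subsets of X × Y with Z = ∪_n Z_n. Then thi(Z) = lim_n thi(Z_n) and sthi(Z) = lim_n sthi(Z_n). -/
open MeasureTheory Set
open scoped ENNReal

namespace VirtCont

variable {X Y : Type*}

variable [MeasurableSpace X] [MeasurableSpace Y]

section ContinuityFromBelow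

open Filter
open scoped Topology

variable {μ : Measure X} {ν : Measure Y}

lemma integrable_of_abs_le {α : Type*} [MeasurableSpace α] {m : Measure α} [IsFiniteMeasure m]
    {f : α → ℝ} {c : ℝ} (hf : Measurable f) (hb : ∀ x, |f x| ≤ c) : Integrable f m :=
  (integrable_const c).mono' hf.aestronglyMeasurable (Eventually.of_forall fun x => by
    simpa using hb x)

/-- An admissible pair for level set `Zk` with budget `s`. -/
def GoodPair (μ : Measure X) (ν : Measure Y) (Zk : Set (X × Y)) (s : ℝ)
    (c : X → ℝ) (d : Y → ℝ) : Prop :=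
  Measurable c ∧ Measurable d ∧ (∀ x, c x ∈ Icc (0:ℝ) 1) ∧ (∀ y, d y ∈ Icc (0:ℝ) 1) ∧
  ((∫ x, c x ∂μ) + (∫ y, d y ∂ν) ≤ s) ∧ (∀ p ∈ Zk, 1 ≤ c p.1 + d p.2)

/-- The quadratic functional. -/
noncomputable def QVal (μ : Measure X) (ν : Measure Y) (c : X → ℝ) (d : Y → ℝ) : ℝ :=
  (∫ x, (c x)^2 ∂μ) + (∫ y, (d y)^2 ∂ν)

variable {μ : Measure X} {ν : Measure Y}

lemma int01 {α : Type*} [MeasurableSpace α] (m : Measure α) [IsFiniteMeasure m]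
    {f : α → ℝ} (hf : Measurable f) (hb : ∀ x, f x ∈ Icc (0:ℝ) 1) : Integrable f m :=
  integrable_of_abs_le hf fun x => abs_le.2 ⟨by linarith [(hb x).1], (hb x).2⟩

lemma int_sq {α : Type*} [MeasurableSpace α] (m : Measure α) [IsFiniteMeasure m]
    {f : α → ℝ} (hf : Measurable f) (hb : ∀ x, f x ∈ Icc (0:ℝ) 1) :
    Integrable (fun x => (f x)^2) m := by
  refine integrable_of_abs_le (hf.pow_const 2) (c := 1) fun x => ?_
  have h := hb x
  rw [abs_pow]
  have : |f x| ≤ 1 := abs_le.2 ⟨by linarith [h.1], h.2⟩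
  calc |f x|^2 ≤ 1^2 := by nlinarith [abs_nonneg (f x)]
    _ = 1 := one_pow 2

lemma GoodPair.mono {Zk Zl : Set (X × Y)} {s : ℝ} {c : X → ℝ} {d : Y → ℝ}
    (hsub : Zk ⊆ Zl) (h : GoodPair μ ν Zl s c d) : GoodPair μ ν Zk s c d :=
  ⟨h.1, h.2.1, h.2.2.1, h.2.2.2.1, h.2.2.2.2.1, fun p hp => h.2.2.2.2.2 p (hsub hp)⟩

lemma GoodPair.midpoint [IsProbabilityMeasure μ] [IsProbabilityMeasure ν]
    {Zk : Set (X × Y)} {s : ℝ} {c c' : X → ℝ} {d d' : Y → ℝ}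
    (h : GoodPair μ ν Zk s c d) (h' : GoodPair μ ν Zk s c' d') :
    GoodPair μ ν Zk s (fun x => (c x + c' x)/2) (fun y => (d y + d' y)/2) := by
  obtain ⟨hc, hd, hcb, hdb, hcost, hcov⟩ := h
  obtain ⟨hc', hd', hcb', hdb', hcost', hcov'⟩ := h'
  refine ⟨(hc.add hc').div_const 2, (hd.add hd').div_const 2, ?_, ?_, ?_, ?_⟩
  · intro x; constructor
    · have := (hcb x).1; have := (hcb' x).1; dsimp; linarith
    · have := (hcb x).2; have := (hcb' x).2; dsimp; linarith
  · intro y; constructor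
    · have := (hdb y).1; have := (hdb' y).1; dsimp; linarith
    · have := (hdb y).2; have := (hdb' y).2; dsimp; linarith
  · have e1 : ∫ x, (c x + c' x)/2 ∂μ = ((∫ x, c x ∂μ) + (∫ x, c' x ∂μ))/2 := by
      rw [integral_div, integral_add (int01 μ hc hcb) (int01 μ hc' hcb')]
    have e2 : ∫ y, (d y + d' y)/2 ∂ν = ((∫ y, d y ∂ν) + (∫ y, d' y ∂ν))/2 := by
      rw [integral_div, integral_add (int01 ν hd hdb) (int01 ν hd' hdb')]
    rw [e1, e2]; linarith
  · intro p hp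
    have h1 := hcov p hp
    have h2 := hcov' p hp
    dsimp; linarith

lemma QVal_nonneg (c : X → ℝ) (d : Y → ℝ) : 0 ≤ QVal μ ν c d :=
  add_nonneg (integral_nonneg fun x => sq_nonneg _) (integral_nonneg fun y => sq_nonneg _)

lemma QVal_le_two [IsProbabilityMeasure μ] [IsProbabilityMeasure ν]
    {c : X → ℝ} {d : Y → ℝ} (hc : Measurable c) (hd : Measurable d)
    (hcb : ∀ x, c x ∈ Icc (0:ℝ) 1) (hdb : ∀ y, d y ∈ Icc (0:ℝ) 1) :
    QVal μ ν c d ≤ 2 := by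
  have h1 : ∫ x, (c x)^2 ∂μ ≤ ∫ _x, (1:ℝ) ∂μ := by
    refine integral_mono (int_sq μ hc hcb) (integrable_const 1) fun x => ?_
    have := hcb x; nlinarith [this.1, this.2]
  have h2 : ∫ y, (d y)^2 ∂ν ≤ ∫ _y, (1:ℝ) ∂ν := by
    refine integral_mono (int_sq ν hd hdb) (integrable_const 1) fun y => ?_
    have := hdb y; nlinarith [this.1, this.2]
  simp only [integral_const, probReal_univ, ENNReal.toReal_one, smul_eq_mul, one_mul] at h1 h2
  unfold QVal; linarith

/-- Parallelogram identity for integrals. -/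
lemma key_est {α : Type*} [MeasurableSpace α] (m : Measure α) [IsFiniteMeasure m]
    {u v : α → ℝ} (hu : Measurable u) (hv : Measurable v)
    (hub : ∀ x, u x ∈ Icc (0:ℝ) 1) (hvb : ∀ x, v x ∈ Icc (0:ℝ) 1) :
    ∫ x, (u x - v x)^2 ∂m
      = 2 * (∫ x, (u x)^2 ∂m) + 2 * (∫ x, (v x)^2 ∂m) - 4 * ∫ x, ((u x + v x)/2)^2 ∂m := by
  have hdint : Integrable (fun x => (u x - v x)^2) m := by
    refine integrable_of_abs_le ((hu.sub hv).pow_const 2) (c := 1) fun x => ?_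
    have h1 := hub x; have h2 := hvb x
    rw [abs_pow, sq_abs]
    nlinarith [h1.1, h1.2, h2.1, h2.2]
  have hmint : Integrable (fun x => ((u x + v x)/2)^2) m := by
    refine integrable_of_abs_le (((hu.add hv).div_const 2).pow_const 2) (c := 1) fun x => ?_
    have h1 := hub x; have h2 := hvb x
    rw [abs_pow, sq_abs]
    nlinarith [h1.1, h1.2, h2.1, h2.2]
  have huint := int_sq m hu hub
  have hvint := int_sq m hv hvb
  have hptw : (fun x => (u x - v x)^2 + 4 * ((u x + v x)/2)^2)
      = fun x => 2*(u x)^2 + 2*(v x)^2 := by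
    funext x; ring
  have h1 : (∫ x, (u x - v x)^2 ∂m) + 4 * ∫ x, ((u x + v x)/2)^2 ∂m
      = 2 * (∫ x, (u x)^2 ∂m) + 2 * (∫ x, (v x)^2 ∂m) := by
    rw [← integral_const_mul, ← integral_const_mul, ← integral_const_mul,
      ← integral_add hdint (hmint.const_mul 4),
      ← integral_add (huint.const_mul 2) (hvint.const_mul 2)]
    exact integral_congr_ae (Eventually.of_forall fun x => by ring)
  linarith

/-- Chebyshev bound. -/
lemma cheb {α : Type*} [MeasurableSpace α] {m : Measure α} {g : α → ℝ} (hg : Measurable g)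
    {t e : ℝ} (ht : 0 < t) (hgint : Integrable (fun x => (g x)^2) m)
    (hge : ∫ x, (g x)^2 ∂m ≤ e) :
    m {x | t < |g x|} ≤ ENNReal.ofReal (e / t^2) := by
  have h1 : {x | t < |g x|} ⊆ {x | ENNReal.ofReal (t^2) ≤ ENNReal.ofReal ((g x)^2)} := by
    intro x hx
    simp only [mem_setOf_eq] at hx ⊢
    refine ENNReal.ofReal_le_ofReal ?_
    nlinarith [abs_nonneg (g x), sq_abs (g x)]
  have h2 := mul_meas_ge_le_lintegral₀ (μ := m)
    ((ENNReal.measurable_ofReal.comp (hg.pow_const 2)).aemeasurable) (ENNReal.ofReal (t^2))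
  have h3 : ∫⁻ x, ENNReal.ofReal ((g x)^2) ∂m ≤ ENNReal.ofReal e := by
    rw [← ofReal_integral_eq_lintegral_ofReal hgint (Eventually.of_forall fun x => sq_nonneg _)]
    exact ENNReal.ofReal_le_ofReal hge
  have h4 : ENNReal.ofReal (t^2) * m {x | t < |g x|} ≤ ENNReal.ofReal e :=
    le_trans (mul_le_mul_right (measure_mono h1) _) (le_trans h2 h3)
  rw [ENNReal.ofReal_div_of_pos (by positivity)]
  rw [ENNReal.le_div_iff_mul_le (Or.inl (ENNReal.ofReal_pos.2 (by positivity)).ne')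
    (Or.inl ENNReal.ofReal_ne_top)]
  rwa [mul_comm]


lemma exists_tendsto_of_dist_le {f : ℕ → ℝ} {J : ℕ}
    (h : ∀ j, J ≤ j → |f j - f (j+1)| ≤ (1/2 : ℝ)^j) :
    ∃ l, Tendsto f atTop (𝓝 l) := by
  have hc : CauchySeq (fun j => f (j + J)) := by
    apply cauchySeq_of_le_geometric (1/2 : ℝ) ((1/2 : ℝ)^J) (by norm_num)
    intro n
    rw [Real.dist_eq]
    have e : n + 1 + J = (n + J) + 1 := by omega
    rw [e]
    have h1 := h (n + J) (Nat.le_add_left _ _)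
    calc |f (n + J) - f (n + J + 1)| ≤ (1/2 : ℝ)^(n + J) := h1
      _ = (1/2 : ℝ)^J * (1/2 : ℝ)^n := by rw [pow_add]; ring
  obtain ⟨l, hl⟩ := cauchySeq_tendsto_of_complete hc
  exact ⟨l, (tendsto_add_atTop_iff_nat J).mp hl⟩

lemma card_filter_le_mul {N : ℕ} {u : ℝ} (hu : 0 ≤ u) :
    ((((Finset.Icc 1 N).filter (fun i : ℕ => (i : ℝ) ≤ N * u)).card : ℝ)) ≤ N * u := by
  have hsub : (Finset.Icc 1 N).filter (fun i : ℕ => (i : ℝ) ≤ N * u) ⊆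
      Finset.Icc 1 (Nat.floor (N * u)) := by
    intro i hi
    simp only [Finset.mem_filter, Finset.mem_Icc] at hi ⊢
    exact ⟨hi.1.1, Nat.le_floor hi.2⟩
  calc ((((Finset.Icc 1 N).filter (fun i : ℕ => (i : ℝ) ≤ N * u)).card : ℝ))
      ≤ ((Finset.Icc 1 (Nat.floor (N * u))).card : ℝ) := by
        exact_mod_cast Finset.card_le_card hsub
    _ = (Nat.floor (N * u) : ℝ) := by rw [Nat.card_Icc]; simp
    _ ≤ N * u := Nat.floor_le (by positivity)

lemma card_filter_le_mul_add_one {N : ℕ} {v : ℝ} (hv : 0 ≤ v) :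
    ((((Finset.Icc 1 N).filter (fun i : ℕ => (N : ℝ) - i ≤ N * v)).card : ℝ)) ≤ N * v + 1 := by
  have hcard : ((Finset.Icc 1 N).filter (fun i : ℕ => (N : ℝ) - i ≤ N * v)).card ≤
      (Finset.range (Nat.floor (N * v) + 1)).card := by
    apply Finset.card_le_card_of_injOn (fun i => N - i)
    · intro i hi
      simp only [Finset.mem_coe, Finset.mem_filter, Finset.mem_Icc] at hi
      simp only [Finset.mem_coe, Finset.mem_range, Nat.lt_succ_iff]
      apply Nat.le_floor
      have hiN : i ≤ N := hi.1.2
      have hc : ((N - i : ℕ) : ℝ) = (N : ℝ) - i := by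
        push_cast [Nat.cast_sub hiN]; ring
      rw [hc]; exact hi.2
    · intro i hi j hj hij
      simp only [Finset.mem_coe, Finset.mem_filter, Finset.mem_Icc] at hi hj
      dsimp only at hij
      omega
  calc ((((Finset.Icc 1 N).filter (fun i : ℕ => (N : ℝ) - i ≤ N * v)).card : ℝ))
      ≤ ((Nat.floor (N * v) + 1 : ℕ) : ℝ) := by
        rw [Finset.card_range] at hcard; exact_mod_cast hcard
    _ ≤ N * v + 1 := by
        push_cast
        have := Nat.floor_le (show (0:ℝ) ≤ N * v by positivity)
        linarith


lemma key [IsProbabilityMeasure μ] [IsProbabilityMeasure ν]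
    (Z : ℕ → Set (X × Y)) (hmonoZ : Monotone Z)
    {s : ℝ} (hs : 0 ≤ s)
    (A : ℕ → Set X) (B : ℕ → Set Y)
    (hAm : ∀ n, MeasurableSet (A n)) (hBm : ∀ n, MeasurableSet (B n))
    (hcov : ∀ n, Z n ⊆ (A n) ×ˢ (univ : Set Y) ∪ (univ : Set X) ×ˢ (B n))
    (hcost : ∀ n, μ (A n) + ν (B n) ≤ ENNReal.ofReal s)
    {δ : ℝ} (hδ : 0 < δ) :
    ∃ (A' : Set X) (B' : Set Y), MeasurableSet A' ∧ MeasurableSet B' ∧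
      ((⋃ n, Z n) ⊆ A' ×ˢ (univ : Set Y) ∪ (univ : Set X) ×ˢ B') ∧
      μ A' + ν B' ≤ ENNReal.ofReal (s + δ) := by
  classical
  set GS : ℕ → Set ℝ := fun k =>
    {q | ∃ cc dd, GoodPair μ ν (Z k) s cc dd ∧ q = QVal μ ν cc dd} with hGSdef
  set D : ℕ → ℝ := fun k => sInf (GS k) with hDdef
  have hindGood : ∀ k, GoodPair μ ν (Z k) s ((A k).indicator 1) ((B k).indicator 1) := by
    intro k
    have hmc : Measurable ((A k).indicator (1 : X → ℝ)) := measurable_const.indicator (hAm k)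
    have hmd : Measurable ((B k).indicator (1 : Y → ℝ)) := measurable_const.indicator (hBm k)
    refine ⟨hmc, hmd, ?_, ?_, ?_, ?_⟩
    · intro x; by_cases h : x ∈ A k <;> simp [Set.indicator_apply, h]
    · intro y; by_cases h : y ∈ B k <;> simp [Set.indicator_apply, h]
    · rw [integral_indicator_one (hAm k), integral_indicator_one (hBm k)]
      have h2 := ENNReal.toReal_le_of_le_ofReal hs (hcost k)
      rwa [ENNReal.toReal_add (measure_ne_top μ _) (measure_ne_top ν _)] at h2
    · intro p hp
      rcases hcov k hp with h | h
      · have h1 : p.1 ∈ A k := h.1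
        have h2 : (0:ℝ) ≤ (B k).indicator 1 p.2 := by
          by_cases hb : p.2 ∈ B k <;> simp [Set.indicator_apply, hb]
        have h3 : (A k).indicator (1 : X → ℝ) p.1 = 1 := by simp [Set.indicator_apply, h1]
        rw [h3]; linarith
      · have h1 : p.2 ∈ B k := h.2
        have h2 : (0:ℝ) ≤ (A k).indicator 1 p.1 := by
          by_cases hb : p.1 ∈ A k <;> simp [Set.indicator_apply, hb]
        have h3 : (B k).indicator (1 : Y → ℝ) p.2 = 1 := by simp [Set.indicator_apply, h1]
        rw [h3]; linarith
  have hGSne : ∀ k, (GS k).Nonempty := fun k => ⟨_, _, _, hindGood k, rfl⟩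
  have hGSbdd : ∀ k, BddBelow (GS k) := by
    intro k
    refine ⟨0, ?_⟩
    rintro q ⟨cc, dd, hg, rfl⟩
    exact QVal_nonneg cc dd
  have hDmono : Monotone D := by
    intro k l hkl
    refine csInf_le_csInf (hGSbdd k) (hGSne l) ?_
    rintro q ⟨cc, dd, hg, rfl⟩
    exact ⟨cc, dd, hg.mono (hmonoZ hkl), rfl⟩
  have hD2 : ∀ k, D k ≤ 2 := by
    intro k
    have h1 : D k ≤ QVal μ ν ((A k).indicator 1) ((B k).indicator 1) :=
      csInf_le (hGSbdd k) ⟨_, _, hindGood k, rfl⟩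
    have hg := hindGood k
    exact h1.trans (QVal_le_two hg.1 hg.2.1 hg.2.2.1 hg.2.2.2.1)
  set Dl : ℝ := ⨆ k, D k with hDldef
  have hbddD : BddAbove (Set.range D) := ⟨2, by rintro q ⟨k, rfl⟩; exact hD2 k⟩
  have hDle : ∀ k, D k ≤ Dl := fun k => le_ciSup hbddD k
  have hDlapp : ∀ θ : ℝ, 0 < θ → ∃ K, ∀ k, K ≤ k → Dl - D k ≤ θ := by
    intro θ hθ
    have h1 : Dl - θ < Dl := by linarith
    obtain ⟨K, hK⟩ := exists_lt_of_lt_ciSup h1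
    exact ⟨K, fun k hk => by have := hDmono hk; linarith⟩
  have hsel : ∀ k, ∃ cc dd, GoodPair μ ν (Z k) s cc dd ∧
      QVal μ ν cc dd ≤ D k + 1/(k+1) := by
    intro k
    have hpos : (0:ℝ) < 1/(k+1) := by positivity
    have hlt : sInf (GS k) < D k + 1/(k+1) := by
      have hDk : D k = sInf (GS k) := by rw [hDdef]
      rw [← hDk]; linarith
    obtain ⟨q, hq, hqlt⟩ := exists_lt_of_csInf_lt (hGSne k) hlt
    obtain ⟨cc, dd, hg, rfl⟩ := hq
    exact ⟨cc, dd, hg, hqlt.le⟩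
  choose c d hGood hQle using hsel
  have hcm : ∀ k, Measurable (c k) := fun k => (hGood k).1
  have hdm : ∀ k, Measurable (d k) := fun k => (hGood k).2.1
  have hcb : ∀ k x, c k x ∈ Icc (0:ℝ) 1 := fun k => (hGood k).2.2.1
  have hdb : ∀ k y, d k y ∈ Icc (0:ℝ) 1 := fun k => (hGood k).2.2.2.1
  have hcd_cost : ∀ k, (∫ x, c k x ∂μ) + (∫ y, d k y ∂ν) ≤ s := fun k => (hGood k).2.2.2.2.1
  have hcd_cov : ∀ k, ∀ p ∈ Z k, 1 ≤ c k p.1 + d k p.2 := fun k => (hGood k).2.2.2.2.2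
  have hEst : ∀ k l, k ≤ l →
      (∫ x, (c k x - c l x)^2 ∂μ) + (∫ y, (d k y - d l y)^2 ∂ν)
        ≤ 2*(Dl - D k) + 2*(1/(k+1)) + 2*(1/(l+1)) := by
    intro k l hkl
    have hgl : GoodPair μ ν (Z k) s (c l) (d l) := (hGood l).mono (hmonoZ hkl)
    have hmid := (hGood k).midpoint hgl
    have hDk : D k ≤ QVal μ ν (fun x => (c k x + c l x)/2) (fun y => (d k y + d l y)/2) :=
      csInf_le (hGSbdd k) ⟨_, _, hmid, rfl⟩
    have hx := key_est μ (hcm k) (hcm l) (hcb k) (hcb l)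
    have hy := key_est ν (hdm k) (hdm l) (hdb k) (hdb l)
    have hqk := hQle k
    have hql := hQle l
    have hDll := hDle l
    simp only [QVal] at hDk hqk hql
    linarith
  choose Kf hKf using fun j : ℕ => hDlapp ((1/8:ℝ)^j/4) (by positivity)
  set φ : ℕ → ℕ := fun j => j + 8^(j+1) + ∑ i ∈ Finset.range (j+1), Kf i with hφdef
  have hφK : ∀ j, Kf j ≤ φ j := by
    intro j
    have h1 : Kf j ≤ ∑ i ∈ Finset.range (j+1), Kf i :=
      Finset.single_le_sum (fun i _ => Nat.zero_le _) (Finset.self_mem_range_succ j)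
    simp only [hφdef]
    exact h1.trans (Nat.le_add_left _ _)
  have hφ8 : ∀ j, 8^(j+1) ≤ φ j := by
    intro j
    simp only [hφdef]
    exact le_trans (Nat.le_add_left _ j) (Nat.le_add_right _ _)
  have hφmono : StrictMono φ := by
    refine strictMono_nat_of_lt_succ ?_
    intro j
    have h1 : (8:ℕ)^(j+1) ≤ 8^(j+2) := Nat.pow_le_pow_right (by norm_num) (by omega)
    have h2 : ∑ i ∈ Finset.range (j+1), Kf i ≤ ∑ i ∈ Finset.range (j+2), Kf i :=
      Finset.sum_le_sum_of_subset (Finset.range_subset_range.2 (by omega))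
    simp only [hφdef]
    exact add_lt_add_of_lt_of_le (add_lt_add_of_lt_of_le (Nat.lt_succ_self j) h1) h2
  have hE : ∀ j, (∫ x, (c (φ j) x - c (φ (j+1)) x)^2 ∂μ)
      + (∫ y, (d (φ j) y - d (φ (j+1)) y)^2 ∂ν) ≤ (1/8:ℝ)^j := by
    intro j
    have h1 := hEst (φ j) (φ (j+1)) (hφmono (Nat.lt_succ_self j)).le
    have h2 : Dl - D (φ j) ≤ (1/8:ℝ)^j/4 := hKf j (φ j) (hφK j)
    have hc8 : (8:ℝ)^(j+1) ≤ (φ j : ℝ) + 1 := by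
      have h3 := hφ8 j
      have h4 : ((8^(j+1) : ℕ) : ℝ) ≤ (φ j : ℝ) := Nat.cast_le.2 h3
      push_cast at h4
      linarith
    have hc8' : (8:ℝ)^(j+1) ≤ (φ (j+1) : ℝ) + 1 := by
      have h3 := (hφ8 j).trans (hφmono (Nat.lt_succ_self j)).le
      have h4 : ((8^(j+1) : ℕ) : ℝ) ≤ (φ (j+1) : ℝ) := Nat.cast_le.2 h3
      push_cast at h4
      linarith
    have hb1 : 1/((φ j:ℝ)+1) ≤ 1/(8:ℝ)^(j+1) :=
      one_div_le_one_div_of_le (by positivity) hc8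
    have hb2 : 1/((φ (j+1):ℝ)+1) ≤ 1/(8:ℝ)^(j+1) :=
      one_div_le_one_div_of_le (by positivity) hc8'
    have he : 1/(8:ℝ)^(j+1) = (1/8:ℝ)^j/8 := by
      rw [one_div_pow, pow_succ, div_div]
    rw [he] at hb1 hb2
    linarith
  have hchebX : ∀ j, μ {x | (1/2:ℝ)^j < |c (φ j) x - c (φ (j+1)) x|}
      ≤ ENNReal.ofReal ((1/2:ℝ)^j) := by
    intro j
    have hgm : Measurable fun x => c (φ j) x - c (φ (j+1)) x := (hcm _).sub (hcm _)
    have hint : Integrable (fun x => (c (φ j) x - c (φ (j+1)) x)^2) μ := by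
      refine integrable_of_abs_le (hgm.pow_const 2) (c := 1) fun x => ?_
      have h1 := hcb (φ j) x; have h2 := hcb (φ (j+1)) x
      rw [abs_pow, sq_abs]; nlinarith [h1.1, h1.2, h2.1, h2.2]
    have hle : ∫ x, (c (φ j) x - c (φ (j+1)) x)^2 ∂μ ≤ (1/8:ℝ)^j := by
      have h0 := hE j
      have hy0 : 0 ≤ ∫ y, (d (φ j) y - d (φ (j+1)) y)^2 ∂ν :=
        integral_nonneg fun y => sq_nonneg _
      linarith
    have hch := cheb hgm (t := (1/2:ℝ)^j) (by positivity) hint hle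
    have heq : (1/8:ℝ)^j / ((1/2:ℝ)^j)^2 = (1/2:ℝ)^j := by
      rw [← pow_mul, show (1/8:ℝ) = (1/2)^3 by norm_num, ← pow_mul]
      rw [div_eq_iff (by positivity), ← pow_add]
      congr 1; omega
    rwa [heq] at hch
  have hchebY : ∀ j, ν {y | (1/2:ℝ)^j < |d (φ j) y - d (φ (j+1)) y|}
      ≤ ENNReal.ofReal ((1/2:ℝ)^j) := by
    intro j
    have hgm : Measurable fun y => d (φ j) y - d (φ (j+1)) y := (hdm _).sub (hdm _)
    have hint : Integrable (fun y => (d (φ j) y - d (φ (j+1)) y)^2) ν := by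
      refine integrable_of_abs_le (hgm.pow_const 2) (c := 1) fun y => ?_
      have h1 := hdb (φ j) y; have h2 := hdb (φ (j+1)) y
      rw [abs_pow, sq_abs]; nlinarith [h1.1, h1.2, h2.1, h2.2]
    have hle : ∫ y, (d (φ j) y - d (φ (j+1)) y)^2 ∂ν ≤ (1/8:ℝ)^j := by
      have h0 := hE j
      have hx0 : 0 ≤ ∫ x, (c (φ j) x - c (φ (j+1)) x)^2 ∂μ :=
        integral_nonneg fun x => sq_nonneg _
      linarith
    have hch := cheb hgm (t := (1/2:ℝ)^j) (by positivity) hint hle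
    have heq : (1/8:ℝ)^j / ((1/2:ℝ)^j)^2 = (1/2:ℝ)^j := by
      rw [← pow_mul, show (1/8:ℝ) = (1/2)^3 by norm_num, ← pow_mul]
      rw [div_eq_iff (by positivity), ← pow_add]
      congr 1; omega
    rwa [heq] at hch
  have hgeo : ∑' j : ℕ, ENNReal.ofReal ((1/2:ℝ)^j) ≠ ⊤ := by
    have h1 : ∀ j:ℕ, ENNReal.ofReal ((1/2:ℝ)^j) = (ENNReal.ofReal (1/2))^j := fun j =>
      ENNReal.ofReal_pow (by norm_num) j
    rw [tsum_congr h1, ENNReal.tsum_geometric]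
    refine ENNReal.inv_ne_top.2 ?_
    have hlt : ENNReal.ofReal (1/2) < 1 := by
      rw [← ENNReal.ofReal_one]
      exact (ENNReal.ofReal_lt_ofReal_iff (by norm_num)).2 (by norm_num)
    intro hcon
    rw [tsub_eq_zero_iff_le] at hcon
    exact absurd (lt_of_lt_of_le hlt hcon) (lt_irrefl _)
  have hBCX : μ (limsup (fun j => {x | (1/2:ℝ)^j < |c (φ j) x - c (φ (j+1)) x|}) atTop) = 0 :=
    measure_limsup_atTop_eq_zero (ne_top_of_le_ne_top hgeo (ENNReal.tsum_le_tsum hchebX))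
  have hBCY : ν (limsup (fun j => {y | (1/2:ℝ)^j < |d (φ j) y - d (φ (j+1)) y|}) atTop) = 0 :=
    measure_limsup_atTop_eq_zero (ne_top_of_le_ne_top hgeo (ENNReal.tsum_le_tsum hchebY))
  have haeX : ∀ᵐ x ∂μ, ∃ l, Tendsto (fun j => c (φ j) x) atTop (𝓝 l) := by
    have h0 : ∀ᵐ x ∂μ,
        x ∉ limsup (fun j => {x | (1/2:ℝ)^j < |c (φ j) x - c (φ (j+1)) x|}) atTop := by
      rw [ae_iff]
      simpa [not_not] using hBCX
    filter_upwards [h0] with x hx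
    rw [Filter.mem_limsup_iff_frequently_mem, Filter.not_frequently] at hx
    obtain ⟨J, hJ⟩ := eventually_atTop.1 hx
    refine exists_tendsto_of_dist_le (f := fun j => c (φ j) x) (J := J) fun j hj => ?_
    have h1 := hJ j hj
    simp only [mem_setOf_eq, not_lt] at h1
    exact h1
  have haeY : ∀ᵐ y ∂ν, ∃ l, Tendsto (fun j => d (φ j) y) atTop (𝓝 l) := by
    have h0 : ∀ᵐ y ∂ν,
        y ∉ limsup (fun j => {y | (1/2:ℝ)^j < |d (φ j) y - d (φ (j+1)) y|}) atTop := by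
      rw [ae_iff]
      simpa [not_not] using hBCY
    filter_upwards [h0] with y hy
    rw [Filter.mem_limsup_iff_frequently_mem, Filter.not_frequently] at hy
    obtain ⟨J, hJ⟩ := eventually_atTop.1 hy
    refine exists_tendsto_of_dist_le (f := fun j => d (φ j) y) (J := J) fun j hj => ?_
    have h1 := hJ j hj
    simp only [mem_setOf_eq, not_lt] at h1
    exact h1
  obtain ⟨cL, hcLm, hcLt⟩ := measurable_limit_of_tendsto_metrizable_ae
    (fun j => (hcm (φ j)).aemeasurable) haeX
  obtain ⟨dL, hdLm, hdLt⟩ := measurable_limit_of_tendsto_metrizable_ae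
    (fun j => (hdm (φ j)).aemeasurable) haeY
  obtain ⟨TX, hTXsub, hTXm, hTXnull⟩ := exists_measurable_superset_of_null (ae_iff.1 hcLt)
  obtain ⟨TY, hTYsub, hTYm, hTYnull⟩ := exists_measurable_superset_of_null (ae_iff.1 hdLt)
  set ca : X → ℝ := fun x => if x ∈ TX then 1 else cL x with hcadef
  set db : Y → ℝ := fun y => if y ∈ TY then 1 else dL y with hdbdef
  have hcam : Measurable ca := Measurable.ite hTXm measurable_const hcLm
  have hdbm : Measurable db := Measurable.ite hTYm measurable_const hdLm
  have hcat : ∀ x ∉ TX, Tendsto (fun j => c (φ j) x) atTop (𝓝 (ca x)) := by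
    intro x hx
    have h1 : x ∉ {x | ¬ Tendsto (fun j => c (φ j) x) atTop (𝓝 (cL x))} :=
      fun h => hx (hTXsub h)
    simp only [mem_setOf_eq, not_not] at h1
    have h2 : ca x = cL x := by rw [hcadef]; simp [hx]
    rwa [h2]
  have hdbt : ∀ y ∉ TY, Tendsto (fun j => d (φ j) y) atTop (𝓝 (db y)) := by
    intro y hy
    have h1 : y ∉ {y | ¬ Tendsto (fun j => d (φ j) y) atTop (𝓝 (dL y))} :=
      fun h => hy (hTYsub h)
    simp only [mem_setOf_eq, not_not] at h1
    have h2 : db y = dL y := by rw [hdbdef]; simp [hy]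
    rwa [h2]
  have hcab : ∀ x, ca x ∈ Icc (0:ℝ) 1 := by
    intro x
    by_cases hx : x ∈ TX
    · have h2 : ca x = 1 := by rw [hcadef]; simp [hx]
      rw [h2]; constructor <;> norm_num
    · constructor
      · exact ge_of_tendsto (hcat x hx) (Eventually.of_forall fun j => (hcb (φ j) x).1)
      · exact le_of_tendsto (hcat x hx) (Eventually.of_forall fun j => (hcb (φ j) x).2)
  have hdbb : ∀ y, db y ∈ Icc (0:ℝ) 1 := by
    intro y
    by_cases hy : y ∈ TY
    · have h2 : db y = 1 := by rw [hdbdef]; simp [hy]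
      rw [h2]; constructor <;> norm_num
    · constructor
      · exact ge_of_tendsto (hdbt y hy) (Eventually.of_forall fun j => (hdb (φ j) y).1)
      · exact le_of_tendsto (hdbt y hy) (Eventually.of_forall fun j => (hdb (φ j) y).2)
  have hcaae : ca =ᵐ[μ] cL := by
    have h0 : ∀ᵐ x ∂μ, x ∉ TX := by rw [ae_iff]; simpa [not_not] using hTXnull
    filter_upwards [h0] with x hx
    rw [hcadef]; simp [hx]
  have hdbae : db =ᵐ[ν] dL := by
    have h0 : ∀ᵐ y ∂ν, y ∉ TY := by rw [ae_iff]; simpa [not_not] using hTYnull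
    filter_upwards [h0] with y hy
    rw [hdbdef]; simp [hy]
  have htendIX : Tendsto (fun j => ∫ x, c (φ j) x ∂μ) atTop (𝓝 (∫ x, cL x ∂μ)) := by
    refine tendsto_integral_of_dominated_convergence (fun _ => (1:ℝ))
      (fun j => (hcm (φ j)).aestronglyMeasurable) (integrable_const 1) ?_ hcLt
    intro j
    refine Eventually.of_forall fun x => ?_
    have h := hcb (φ j) x
    show ‖c (φ j) x‖ ≤ 1
    rw [Real.norm_eq_abs]; exact abs_le.2 ⟨by linarith [h.1], h.2⟩
  have htendIY : Tendsto (fun j => ∫ y, d (φ j) y ∂ν) atTop (𝓝 (∫ y, dL y ∂ν)) := by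
    refine tendsto_integral_of_dominated_convergence (fun _ => (1:ℝ))
      (fun j => (hdm (φ j)).aestronglyMeasurable) (integrable_const 1) ?_ hdLt
    intro j
    refine Eventually.of_forall fun y => ?_
    have h := hdb (φ j) y
    show ‖d (φ j) y‖ ≤ 1
    rw [Real.norm_eq_abs]; exact abs_le.2 ⟨by linarith [h.1], h.2⟩
  have hcost_lim : (∫ x, ca x ∂μ) + (∫ y, db y ∂ν) ≤ s := by
    have h1 : ∫ x, ca x ∂μ = ∫ x, cL x ∂μ := integral_congr_ae hcaae
    have h2 : ∫ y, db y ∂ν = ∫ y, dL y ∂ν := integral_congr_ae hdbae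
    rw [h1, h2]
    exact le_of_tendsto (htendIX.add htendIY) (Eventually.of_forall fun j => hcd_cost (φ j))
  have hcovL : ∀ p ∈ ⋃ n, Z n, 1 ≤ ca p.1 + db p.2 := by
    intro p hp
    rcases mem_iUnion.1 hp with ⟨m, hpm⟩
    by_cases h1 : p.1 ∈ TX
    · have he1 : ca p.1 = 1 := by rw [hcadef]; simp [h1]
      have h2 := (hdbb p.2).1
      rw [he1]; linarith
    · by_cases h2 : p.2 ∈ TY
      · have he2 : db p.2 = 1 := by rw [hdbdef]; simp [h2]
        have h3 := (hcab p.1).1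
        rw [he2]; linarith
      · refine ge_of_tendsto ((hcat p.1 h1).add (hdbt p.2 h2)) ?_
        filter_upwards [eventually_ge_atTop m] with j hj
        have hφj : m ≤ φ j := hj.trans hφmono.le_apply
        exact hcd_cov (φ j) p (hmonoZ hφj hpm)
  -- discretization
  obtain ⟨N, hN1, hNδ⟩ : ∃ N : ℕ, 1 ≤ N ∧ 1/(N:ℝ) ≤ δ := by
    obtain ⟨N0, hN0⟩ := exists_nat_ge (1/δ)
    refine ⟨max 1 N0, le_max_left _ _, ?_⟩
    have h1 : 1/δ ≤ ((max 1 N0 : ℕ) : ℝ) :=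
      hN0.trans (by exact_mod_cast Nat.le_max_right 1 N0)
    have h2 : (0:ℝ) < ((max 1 N0 : ℕ) : ℝ) := by
      have h3 : (1:ℕ) ≤ max 1 N0 := le_max_left _ _
      have h4 : (0:ℕ) < max 1 N0 := lt_of_lt_of_le Nat.zero_lt_one h3
      exact_mod_cast h4
    rw [div_le_iff₀ h2]
    rw [div_le_iff₀ hδ] at h1
    nlinarith
  have hNpos : (0:ℝ) < (N:ℝ) := by exact_mod_cast hN1
  set SA : ℕ → Set X := fun i => {x | (i:ℝ) ≤ (N:ℝ) * ca x} with hSAdef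
  set SB : ℕ → Set Y := fun i => {y | (N:ℝ) - (i:ℝ) ≤ (N:ℝ) * db y} with hSBdef
  have hSAm : ∀ i, MeasurableSet (SA i) := fun i =>
    measurableSet_le measurable_const (measurable_const.mul hcam)
  have hSBm : ∀ i, MeasurableSet (SB i) := fun i =>
    measurableSet_le measurable_const (measurable_const.mul hdbm)
  have hcovi : ∀ i, (⋃ n, Z n) ⊆ SA i ×ˢ (univ : Set Y) ∪ (univ : Set X) ×ˢ SB i := by
    intro i p hp
    by_cases h : (i:ℝ) ≤ (N:ℝ) * ca p.1
    · exact Or.inl ⟨by simp only [hSAdef, mem_setOf_eq]; exact h, mem_univ _⟩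
    · refine Or.inr ⟨mem_univ _, ?_⟩
      have h1 : (N:ℝ) * ca p.1 < i := not_le.1 h
      have h2 := hcovL p hp
      have h3 : (N:ℝ) * 1 ≤ (N:ℝ) * (ca p.1 + db p.2) :=
        mul_le_mul_of_nonneg_left h2 hNpos.le
      simp only [hSBdef, mem_setOf_eq]
      nlinarith
  have hsumX : ∑ i ∈ Finset.Icc 1 N, (μ (SA i)).toReal ≤ (N:ℝ) * ∫ x, ca x ∂μ := by
    have h1 : ∀ i ∈ Finset.Icc 1 N,
        (μ (SA i)).toReal = ∫ x, (SA i).indicator (fun _ => (1:ℝ)) x ∂μ := by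
      intro i _
      rw [integral_indicator_const (1:ℝ) (hSAm i), smul_eq_mul, mul_one]; rfl
    rw [Finset.sum_congr rfl h1, ← integral_finset_sum _
      (fun i _ => (integrable_const (1:ℝ)).indicator (hSAm i))]
    rw [← integral_const_mul]
    refine integral_mono (integrable_finset_sum _
      (fun i _ => (integrable_const (1:ℝ)).indicator (hSAm i)))
      ((int01 μ hcam hcab).const_mul _) fun x => ?_
    have h2 : ∑ i ∈ Finset.Icc 1 N, (SA i).indicator (fun _ => (1:ℝ)) x
        = (((Finset.Icc 1 N).filter (fun i : ℕ => (i:ℝ) ≤ (N:ℝ) * ca x)).card : ℝ) := by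
      rw [← Finset.sum_boole]
      refine Finset.sum_congr rfl fun i _ => ?_
      by_cases h : x ∈ SA i
      · have h' : (i:ℝ) ≤ (N:ℝ) * ca x := by simpa [hSAdef, mem_setOf_eq] using h
        simp [Set.indicator_apply, h, h']
      · have h' : ¬ ((i:ℝ) ≤ (N:ℝ) * ca x) := by simpa [hSAdef, mem_setOf_eq] using h
        simp [Set.indicator_apply, h, h']
    calc (fun x => ∑ i ∈ Finset.Icc 1 N, (SA i).indicator (fun _ => (1:ℝ)) x) x
        = (((Finset.Icc 1 N).filter (fun i : ℕ => (i:ℝ) ≤ (N:ℝ) * ca x)).card : ℝ) := h2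
      _ ≤ (N:ℝ) * ca x := card_filter_le_mul (hcab x).1
  have hsumY : ∑ i ∈ Finset.Icc 1 N, (ν (SB i)).toReal ≤ (N:ℝ) * (∫ y, db y ∂ν) + 1 := by
    have h1 : ∀ i ∈ Finset.Icc 1 N,
        (ν (SB i)).toReal = ∫ y, (SB i).indicator (fun _ => (1:ℝ)) y ∂ν := by
      intro i _
      rw [integral_indicator_const (1:ℝ) (hSBm i), smul_eq_mul, mul_one]; rfl
    rw [Finset.sum_congr rfl h1, ← integral_finset_sum _
      (fun i _ => (integrable_const (1:ℝ)).indicator (hSBm i))]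
    have h3 : ∫ y, ((N:ℝ) * db y + 1) ∂ν = (N:ℝ) * (∫ y, db y ∂ν) + 1 := by
      rw [integral_add ((int01 ν hdbm hdbb).const_mul _) (integrable_const 1),
        integral_const_mul, integral_const]
      simp [measure_univ]
    rw [← h3]
    refine integral_mono (integrable_finset_sum _
      (fun i _ => (integrable_const (1:ℝ)).indicator (hSBm i)))
      (((int01 ν hdbm hdbb).const_mul _).add (integrable_const 1)) fun y => ?_
    have h2 : ∑ i ∈ Finset.Icc 1 N, (SB i).indicator (fun _ => (1:ℝ)) y
        = (((Finset.Icc 1 N).filter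
            (fun i : ℕ => (N:ℝ) - (i:ℝ) ≤ (N:ℝ) * db y)).card : ℝ) := by
      rw [← Finset.sum_boole]
      refine Finset.sum_congr rfl fun i _ => ?_
      by_cases h : y ∈ SB i
      · have h' : (N:ℝ) - (i:ℝ) ≤ (N:ℝ) * db y := by simpa [hSBdef, mem_setOf_eq] using h
        simp [Set.indicator_apply, h, h']
      · have h' : ¬ ((N:ℝ) - (i:ℝ) ≤ (N:ℝ) * db y) := by simpa [hSBdef, mem_setOf_eq] using h
        simp [Set.indicator_apply, h, h']
    calc (fun y => ∑ i ∈ Finset.Icc 1 N, (SB i).indicator (fun _ => (1:ℝ)) y) y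
        = (((Finset.Icc 1 N).filter
            (fun i : ℕ => (N:ℝ) - (i:ℝ) ≤ (N:ℝ) * db y)).card : ℝ) := h2
      _ ≤ (N:ℝ) * db y + 1 := card_filter_le_mul_add_one (hdbb y).1
  have htot : ∑ i ∈ Finset.Icc 1 N, ((μ (SA i)).toReal + (ν (SB i)).toReal)
      ≤ ∑ _i ∈ Finset.Icc 1 N, (s + 1/(N:ℝ)) := by
    rw [Finset.sum_add_distrib, Finset.sum_const, Nat.card_Icc]
    simp only [Nat.add_sub_cancel, nsmul_eq_mul]
    have h4 : (N:ℝ) * (∫ x, ca x ∂μ) + ((N:ℝ) * (∫ y, db y ∂ν) + 1) ≤ (N:ℝ) * s + 1 := by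
      nlinarith [hcost_lim, hNpos]
    have h5 : (N:ℝ) * (s + 1/(N:ℝ)) = (N:ℝ) * s + 1 := by field_simp
    calc ∑ i ∈ Finset.Icc 1 N, (μ (SA i)).toReal + ∑ i ∈ Finset.Icc 1 N, (ν (SB i)).toReal
        ≤ (N:ℝ) * s + 1 := by linarith [hsumX, hsumY]
      _ = (N:ℝ) * (s + 1/(N:ℝ)) := h5.symm
  obtain ⟨i, hiI, hile⟩ := Finset.exists_le_of_sum_le
    ⟨1, Finset.mem_Icc.2 ⟨le_refl 1, hN1⟩⟩ htot
  refine ⟨SA i, SB i, hSAm i, hSBm i, hcovi i, ?_⟩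
  have e1 : μ (SA i) + ν (SB i)
      = ENNReal.ofReal ((μ (SA i)).toReal + (ν (SB i)).toReal) := by
    rw [ENNReal.ofReal_add ENNReal.toReal_nonneg ENNReal.toReal_nonneg,
      ENNReal.ofReal_toReal (measure_ne_top _ _), ENNReal.ofReal_toReal (measure_ne_top _ _)]
  rw [e1]
  refine ENNReal.ofReal_le_ofReal ?_
  have hd : 1/(N:ℝ) ≤ δ := hNδ
  linarith [hile]


lemma sthi_le_of_cover {Z : Set (X × Y)} {A : Set X} {B : Set Y}
    (hA : MeasurableSet A) (hB : MeasurableSet B)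
    (hcov : Z ⊆ (A ×ˢ (univ : Set Y)) ∪ ((univ : Set X) ×ˢ B)) :
    sthi μ ν Z ≤ μ A + ν B :=
  iInf_le_of_le A <| iInf_le_of_le B <| iInf_le_of_le hA <| iInf_le_of_le hB <| iInf_le _ hcov

lemma thi_le_of_cover {Z : Set (X × Y)} {A : Set X} {B : Set Y}
    (hA : MeasurableSet A) (hB : MeasurableSet B)
    (hcov : (μ.prod ν) (Z \ ((A ×ˢ (univ : Set Y)) ∪ ((univ : Set X) ×ˢ B))) = 0) :
    thi μ ν Z ≤ μ A + ν B :=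
  iInf_le_of_le A <| iInf_le_of_le B <| iInf_le_of_le hA <| iInf_le_of_le hB <| iInf_le _ hcov

lemma exists_cover_of_sthi_lt {Z : Set (X × Y)} {cst : ℝ≥0∞} (h : sthi μ ν Z < cst) :
    ∃ A B, MeasurableSet A ∧ MeasurableSet B ∧
      Z ⊆ (A ×ˢ (univ : Set Y)) ∪ ((univ : Set X) ×ˢ B) ∧ μ A + ν B < cst := by
  simp only [sthi, iInf_lt_iff] at h
  obtain ⟨A, B, hA, hB, hcov, hc⟩ := h
  exact ⟨A, B, hA, hB, hcov, hc⟩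

lemma exists_cover_of_thi_lt {Z : Set (X × Y)} {cst : ℝ≥0∞} (h : thi μ ν Z < cst) :
    ∃ A B, MeasurableSet A ∧ MeasurableSet B ∧
      (μ.prod ν) (Z \ ((A ×ˢ (univ : Set Y)) ∪ ((univ : Set X) ×ˢ B))) = 0 ∧ μ A + ν B < cst := by
  simp only [thi, iInf_lt_iff] at h
  obtain ⟨A, B, hA, hB, hcov, hc⟩ := h
  exact ⟨A, B, hA, hB, hcov, hc⟩

lemma sthi_mono {Z Z' : Set (X × Y)} (h : Z ⊆ Z') : sthi μ ν Z ≤ sthi μ ν Z' := by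
  refine le_iInf fun A => le_iInf fun B => le_iInf fun hA => le_iInf fun hB =>
    le_iInf fun hcov => ?_
  exact sthi_le_of_cover hA hB (h.trans hcov)

lemma thi_mono {Z Z' : Set (X × Y)} (h : Z ⊆ Z') : thi μ ν Z ≤ thi μ ν Z' := by
  refine le_iInf fun A => le_iInf fun B => le_iInf fun hA => le_iInf fun hB =>
    le_iInf fun hcov => ?_
  refine thi_le_of_cover hA hB (le_antisymm (le_trans (measure_mono ?_) hcov.le) zero_le)
  exact diff_subset_diff_left h

lemma sthi_le_one [IsProbabilityMeasure μ] (Z : Set (X × Y)) : sthi μ ν Z ≤ 1 := by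
  have h := sthi_le_of_cover (μ := μ) (ν := ν) (Z := Z) MeasurableSet.univ MeasurableSet.empty
    (fun p _ => Or.inl ⟨mem_univ _, mem_univ _⟩)
  simpa using h

lemma thi_le_sthi (Z : Set (X × Y)) : thi μ ν Z ≤ sthi μ ν Z := by
  refine le_iInf fun A => le_iInf fun B => le_iInf fun hA => le_iInf fun hB =>
    le_iInf fun hcov => ?_
  refine thi_le_of_cover hA hB ?_
  rw [diff_eq_empty.2 hcov]
  exact measure_empty

lemma thi_le_one [IsProbabilityMeasure μ] (Z : Set (X × Y)) : thi μ ν Z ≤ 1 :=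
  (thi_le_sthi Z).trans (sthi_le_one Z)

lemma sthi_iUnion_le [IsProbabilityMeasure μ] [IsProbabilityMeasure ν]
    (Z : ℕ → Set (X × Y)) (hmono : Monotone Z) :
    sthi μ ν (⋃ n, Z n) ≤ ⨆ n, sthi μ ν (Z n) := by
  set S := ⨆ n, sthi μ ν (Z n) with hS
  have hS1 : S ≤ 1 := iSup_le fun n => sthi_le_one _
  have hSne : S ≠ ⊤ := ne_top_of_le_ne_top ENNReal.one_ne_top hS1
  refine ENNReal.le_of_forall_pos_le_add fun ε hε _ => ?_
  set e : ℝ := (ε : ℝ)/2 with hedef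
  have he : 0 < e := by positivity
  have hcol : ∀ n, ∃ A B, MeasurableSet A ∧ MeasurableSet B ∧
      (Z n ⊆ A ×ˢ (univ : Set Y) ∪ (univ : Set X) ×ˢ B) ∧
      μ A + ν B ≤ S + ENNReal.ofReal e := by
    intro n
    have h1 : sthi μ ν (Z n) < S + ENNReal.ofReal e := by
      have h2 : sthi μ ν (Z n) ≤ S := le_iSup (fun n => sthi μ ν (Z n)) n
      exact lt_of_le_of_lt h2 (ENNReal.lt_add_right hSne (ENNReal.ofReal_pos.2 he).ne')
    obtain ⟨A, B, hA, hB, hc, hlt⟩ := exists_cover_of_sthi_lt h1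
    exact ⟨A, B, hA, hB, hc, hlt.le⟩
  choose Af Bf hAmf hBmf hcovf hcostf using hcol
  set s : ℝ := (S + ENNReal.ofReal e).toReal with hsdef
  have hsne : S + ENNReal.ofReal e ≠ ⊤ := by
    exact ENNReal.add_ne_top.2 ⟨hSne, ENNReal.ofReal_ne_top⟩
  have hsofReal : ENNReal.ofReal s = S + ENNReal.ofReal e := ENNReal.ofReal_toReal hsne
  have hcost' : ∀ n, μ (Af n) + ν (Bf n) ≤ ENNReal.ofReal s := by
    intro n; rw [hsofReal]; exact hcostf n
  obtain ⟨A', B', hA', hB', hcov', hcost''⟩ :=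
    key Z hmono ENNReal.toReal_nonneg Af Bf hAmf hBmf hcovf hcost' he
  have h6 : ENNReal.ofReal e + ENNReal.ofReal e = (ε : ℝ≥0∞) := by
    rw [← ENNReal.ofReal_add he.le he.le]
    have h7 : e + e = (ε : ℝ) := by rw [hedef]; ring
    rw [h7, ENNReal.ofReal_coe_nnreal]
  calc sthi μ ν (⋃ n, Z n) ≤ μ A' + ν B' := sthi_le_of_cover hA' hB' hcov'
    _ ≤ ENNReal.ofReal (s + e) := hcost''
    _ = ENNReal.ofReal s + ENNReal.ofReal e := ENNReal.ofReal_add ENNReal.toReal_nonneg he.le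
    _ = S + (ENNReal.ofReal e + ENNReal.ofReal e) := by rw [hsofReal, add_assoc]
    _ = S + ε := by rw [h6]

lemma thi_iUnion_le [IsProbabilityMeasure μ] [IsProbabilityMeasure ν]
    (Z : ℕ → Set (X × Y)) (hmono : Monotone Z) :
    thi μ ν (⋃ n, Z n) ≤ ⨆ n, thi μ ν (Z n) := by
  set S := ⨆ n, thi μ ν (Z n) with hS
  have hS1 : S ≤ 1 := iSup_le fun n => thi_le_one _
  have hSne : S ≠ ⊤ := ne_top_of_le_ne_top ENNReal.one_ne_top hS1
  refine ENNReal.le_of_forall_pos_le_add fun ε hε _ => ?_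
  set e : ℝ := (ε : ℝ)/2 with hedef
  have he : 0 < e := by positivity
  have hcol : ∀ n, ∃ A B, MeasurableSet A ∧ MeasurableSet B ∧
      ((μ.prod ν) (Z n \ (A ×ˢ (univ : Set Y) ∪ (univ : Set X) ×ˢ B)) = 0) ∧
      μ A + ν B ≤ S + ENNReal.ofReal e := by
    intro n
    have h1 : thi μ ν (Z n) < S + ENNReal.ofReal e := by
      have h2 : thi μ ν (Z n) ≤ S := le_iSup (fun n => thi μ ν (Z n)) n
      exact lt_of_le_of_lt h2 (ENNReal.lt_add_right hSne (ENNReal.ofReal_pos.2 he).ne')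
    obtain ⟨A, B, hA, hB, hc, hlt⟩ := exists_cover_of_thi_lt h1
    exact ⟨A, B, hA, hB, hc, hlt.le⟩
  choose Af Bf hAmf hBmf hcovf hcostf using hcol
  set Nn : Set (X × Y) :=
    ⋃ n, (Z n \ ((Af n) ×ˢ (univ : Set Y) ∪ (univ : Set X) ×ˢ (Bf n))) with hNdef
  have hNnull : (μ.prod ν) Nn = 0 := measure_iUnion_null hcovf
  set Z' : ℕ → Set (X × Y) := fun n => Z n \ Nn with hZ'def
  have hmono' : Monotone Z' := fun a b hab => diff_subset_diff_left (hmono hab)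
  have hcov' : ∀ n, Z' n ⊆ (Af n) ×ˢ (univ : Set Y) ∪ (univ : Set X) ×ˢ (Bf n) := by
    intro n p hp
    obtain ⟨hpZ, hpN⟩ := hp
    by_contra hnc
    exact hpN (mem_iUnion.2 ⟨n, ⟨hpZ, hnc⟩⟩)
  set s : ℝ := (S + ENNReal.ofReal e).toReal with hsdef
  have hsne : S + ENNReal.ofReal e ≠ ⊤ := ENNReal.add_ne_top.2 ⟨hSne, ENNReal.ofReal_ne_top⟩
  have hsofReal : ENNReal.ofReal s = S + ENNReal.ofReal e := ENNReal.ofReal_toReal hsne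
  have hcost' : ∀ n, μ (Af n) + ν (Bf n) ≤ ENNReal.ofReal s := by
    intro n; rw [hsofReal]; exact hcostf n
  obtain ⟨A', B', hA', hB', hcovU, hcost''⟩ :=
    key Z' hmono' ENNReal.toReal_nonneg Af Bf hAmf hBmf hcov' hcost' he
  have hfinal : (μ.prod ν) ((⋃ n, Z n) \ (A' ×ˢ (univ : Set Y) ∪ (univ : Set X) ×ˢ B')) = 0 := by
    refine measure_mono_null ?_ hNnull
    intro p hp
    obtain ⟨hpU, hpC⟩ := hp
    by_contra hpN
    rcases mem_iUnion.1 hpU with ⟨n, hn⟩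
    exact hpC (hcovU (mem_iUnion.2 ⟨n, ⟨hn, hpN⟩⟩))
  have h6 : ENNReal.ofReal e + ENNReal.ofReal e = (ε : ℝ≥0∞) := by
    rw [← ENNReal.ofReal_add he.le he.le]
    have h7 : e + e = (ε : ℝ) := by rw [hedef]; ring
    rw [h7, ENNReal.ofReal_coe_nnreal]
  calc thi μ ν (⋃ n, Z n) ≤ μ A' + ν B' := thi_le_of_cover hA' hB' hfinal
    _ ≤ ENNReal.ofReal (s + e) := hcost''
    _ = ENNReal.ofReal s + ENNReal.ofReal e := ENNReal.ofReal_add ENNReal.toReal_nonneg he.le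
    _ = S + (ENNReal.ofReal e + ENNReal.ofReal e) := by rw [hsofReal, add_assoc]
    _ = S + ε := by rw [h6]


/-- continuity of thickness and proper thickness from below: for an
increasing sequence of measurable sets `Z_n` with union `Z`, `thi(Z) = lim thi(Z_n)` and
`sthi(Z) = lim sthi(Z_n)`. -/
theorem thickness_continuity_from_below
    [StandardBorelSpace X] [StandardBorelSpace Y]
    (μ : Measure X) (ν : Measure Y)
    [IsProbabilityMeasure μ] [IsProbabilityMeasure ν] [NullSingletonClass μ] [NullSingletonClass ν]
    (Z : ℕ → Set (X × Y)) (hmeas : ∀ n, MeasurableSet (Z n)) (hmono : Monotone Z) :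
    Filter.Tendsto (fun n => thi μ ν (Z n)) Filter.atTop (nhds (thi μ ν (⋃ n, Z n))) ∧
    Filter.Tendsto (fun n => sthi μ ν (Z n)) Filter.atTop (nhds (sthi μ ν (⋃ n, Z n))) := by
  constructor
  · have hmonot : Monotone fun n => thi μ ν (Z n) := fun a b hab => thi_mono (hmono hab)
    have heq : (⨆ n, thi μ ν (Z n)) = thi μ ν (⋃ n, Z n) :=
      le_antisymm (iSup_le fun n => thi_mono (subset_iUnion Z n)) (thi_iUnion_le Z hmono)
    rw [← heq]
    exact tendsto_atTop_iSup hmonot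
  · have hmonot : Monotone fun n => sthi μ ν (Z n) := fun a b hab => sthi_mono (hmono hab)
    have heq : (⨆ n, sthi μ ν (Z n)) = sthi μ ν (⋃ n, Z n) :=
      le_antisymm (iSup_le fun n => sthi_mono (subset_iUnion Z n)) (sthi_iUnion_le Z hmono)
    rw [← heq]
    exact tendsto_atTop_iSup hmonot


end ContinuityFromBelow

end VirtCont
end

section
/- Let (X, μ) and (Y, ν) be standard probability spaces. For every measurable function f : X × Y → ℝ one has τ(0, f) ≤ √(2 ‖f‖_{SR¹}). In particular, convergence in the SR¹-norm implies convergence in the τ-metric. -/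
open MeasureTheory Set
open scoped ENNReal

namespace VirtCont

variable {X Y : Type*}

variable [MeasurableSpace X] [MeasurableSpace Y]

lemma markov_aux {Z : Type*} [MeasurableSpace Z] (κ : Measure Z) (c : Z → ℝ)
    (hc : Measurable c) {t : ℝ} (ht : 0 < t) :
    κ {z | t < c z} ≤ (∫⁻ z, ENNReal.ofReal (c z) ∂κ) / ENNReal.ofReal t := by
  rw [ENNReal.le_div_iff_mul_le (Or.inl (ENNReal.ofReal_pos.mpr ht).ne')
    (Or.inl ENNReal.ofReal_ne_top), mul_comm]
  refine le_trans ?_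
    (mul_meas_ge_le_lintegral₀ hc.ennreal_ofReal.aemeasurable (ENNReal.ofReal t))
  refine mul_le_mul_right (measure_mono ?_) _
  intro z hz
  exact ENNReal.ofReal_le_ofReal (le_of_lt hz)

lemma thi_le_of_sq {μ : Measure X} {ν : Measure Y}
    (f : X × Y → ℝ) {ε : ℝ} (hε : 0 < ε)
    (h : 2 * srNorm μ ν f < ENNReal.ofReal ε * ENNReal.ofReal ε) :
    thi μ ν {p : X × Y | ε < |f p|} ≤ ENNReal.ofReal ε := by
  have hlt : srNorm μ ν f < ENNReal.ofReal ε * ENNReal.ofReal ε / 2 := by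
    rw [ENNReal.lt_div_iff_mul_lt (Or.inl two_ne_zero) (Or.inl ENNReal.ofNat_ne_top), mul_comm]
    exact h
  simp only [srNorm, iInf_lt_iff] at hlt
  obtain ⟨a, b, ha, hb, ha0, hb0, hab, hI⟩ := hlt
  set A : Set X := {x | ε / 2 < a x} with hA
  set B : Set Y := {y | ε / 2 < b y} with hB
  have hAm : MeasurableSet A := measurableSet_lt measurable_const ha
  have hBm : MeasurableSet B := measurableSet_lt measurable_const hb
  have hnull : (μ.prod ν) ({p : X × Y | ε < |f p|} \
      ((A ×ˢ (univ : Set Y)) ∪ ((univ : Set X) ×ˢ B))) = 0 := by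
    refine measure_mono_null ?_ (ae_iff.mp hab)
    intro p hp
    simp only [mem_diff, mem_setOf_eq, mem_union, mem_prod, mem_univ, and_true, true_and,
      not_or] at hp ⊢
    obtain ⟨hfp, hp1, hp2⟩ := hp
    simp only [hA, mem_setOf_eq, not_lt] at hp1
    simp only [hB, mem_setOf_eq, not_lt] at hp2
    intro hle
    linarith
  have hthi : thi μ ν {p : X × Y | ε < |f p|} ≤ μ A + ν B :=
    iInf_le_of_le A <| iInf_le_of_le B <| iInf_le_of_le hAm <| iInf_le_of_le hBm <|
      iInf_le_of_le hnull le_rfl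
  refine hthi.trans ?_
  have hεh : (0:ℝ) < ε / 2 := by linarith
  have key : μ A + ν B ≤ ((∫⁻ x, ENNReal.ofReal (a x) ∂μ) + (∫⁻ y, ENNReal.ofReal (b y) ∂ν))
      / ENNReal.ofReal (ε/2) := by
    rw [ENNReal.add_div, hA, hB]
    exact add_le_add (markov_aux μ a ha hεh) (markov_aux ν b hb hεh)
  refine key.trans ?_
  rw [ENNReal.div_le_iff (ENNReal.ofReal_pos.mpr hεh).ne' ENNReal.ofReal_ne_top]
  refine hI.le.trans ?_
  have h2 : ENNReal.ofReal (ε/2) = ENNReal.ofReal ε / 2 := by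
    rw [ENNReal.ofReal_div_of_pos two_pos]
    norm_num
  rw [h2, mul_div_assoc]

lemma tauDist_nonneg (μ : Measure X) (ν : Measure Y) (f g : X × Y → ℝ) :
    0 ≤ tauDist μ ν f g :=
  Real.sInf_nonneg fun _ hx => hx.1.le

lemma key_bound (μ : Measure X) (ν : Measure Y) (f : X × Y → ℝ) :
    ENNReal.ofReal (tauDist μ ν (fun _ => 0) f) ≤ (2 * srNorm μ ν f) ^ ((1 : ℝ) / 2) := by
  by_cases htop : 2 * srNorm μ ν f = ⊤
  · rw [htop, ENNReal.top_rpow_of_pos (by norm_num)]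
    exact le_top
  set S := 2 * srNorm μ ν f with hSdef
  set r : ℝ := (S ^ ((1:ℝ)/2)).toReal with hr
  have hrS : ENNReal.ofReal r = S ^ ((1:ℝ)/2) :=
    ENNReal.ofReal_toReal (ENNReal.rpow_ne_top_of_nonneg (by norm_num) htop)
  rw [← hrS]
  refine ENNReal.ofReal_le_ofReal ?_
  -- tauDist ≤ r
  have hmem : ∀ ε : ℝ, r < ε → ε ∈ {ε : ℝ | 0 < ε ∧
      thi μ ν {p : X × Y | ε < |(fun _ => (0:ℝ)) p - f p|} ≤ ENNReal.ofReal ε} := by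
    intro ε hε
    have hεpos : 0 < ε := lt_of_le_of_lt ENNReal.toReal_nonneg hε
    have hsq : S < ENNReal.ofReal ε * ENNReal.ofReal ε := by
      by_cases hS0 : S = 0
      · rw [hS0]
        exact ENNReal.mul_pos (ENNReal.ofReal_pos.mpr hεpos).ne' (ENNReal.ofReal_pos.mpr hεpos).ne'
      · have hSr : S = ENNReal.ofReal r * ENNReal.ofReal r := by
          rw [hrS, ← ENNReal.rpow_add _ _ hS0 htop]
          norm_num
        rw [hSr]
        have h1 : ENNReal.ofReal r < ENNReal.ofReal ε :=
          (ENNReal.ofReal_lt_ofReal_iff hεpos).mpr hε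
        calc ENNReal.ofReal r * ENNReal.ofReal r
            ≤ ENNReal.ofReal r * ENNReal.ofReal ε := mul_le_mul_right h1.le _
          _ < ENNReal.ofReal ε * ENNReal.ofReal ε := by
              refine ENNReal.mul_lt_mul_left (ENNReal.ofReal_pos.mpr hεpos).ne' ENNReal.ofReal_ne_top ?_
              exact h1
    have hthi := thi_le_of_sq (μ := μ) (ν := ν) f hεpos (hSdef ▸ hsq)
    refine ⟨hεpos, ?_⟩
    simpa [zero_sub, abs_neg] using hthi
  refine le_of_forall_gt_imp_ge_of_dense fun ε hε => ?_
  exact csInf_le ⟨0, fun x hx => hx.1.le⟩ (hmem ε hε)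

set_option linter.unusedVariables false in
/-- `τ(0, f) ≤ √(2 ‖f‖_{SR¹})` for every measurable `f`; in particular,
convergence in the `SR¹`-norm implies convergence in the `τ`-metric. -/
theorem tau_le_sqrt_srNorm
    [StandardBorelSpace X] [StandardBorelSpace Y]
    (μ : Measure X) (ν : Measure Y)
    [IsProbabilityMeasure μ] [IsProbabilityMeasure ν] [NullSingletonClass μ] [NullSingletonClass ν]
    (f : X × Y → ℝ) (hf : Measurable f) :
    ENNReal.ofReal (tauDist μ ν (fun _ => 0) f) ≤ (2 * srNorm μ ν f) ^ ((1 : ℝ) / 2) ∧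
    ∀ (F : ℕ → X × Y → ℝ) (g : X × Y → ℝ),
      Filter.Tendsto (fun n => srNorm μ ν (fun p => F n p - g p)) Filter.atTop (nhds 0) →
      Filter.Tendsto (fun n => tauDist μ ν (F n) g) Filter.atTop (nhds 0) := by
  refine ⟨key_bound μ ν f, ?_⟩
  intro F g hconv
  have heq : ∀ n, tauDist μ ν (F n) g = tauDist μ ν (fun _ => 0) (fun p => F n p - g p) := by
    intro n
    simp only [tauDist, zero_sub, abs_neg, abs_sub_comm]
  have h2 : Filter.Tendsto (fun n => 2 * srNorm μ ν (fun p => F n p - g p))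
      Filter.atTop (nhds 0) := by
    have := ENNReal.Tendsto.const_mul (a := 2) hconv (Or.inr ENNReal.ofNat_ne_top)
    simpa using this
  have hrpow : Filter.Tendsto
      (fun n => (2 * srNorm μ ν (fun p => F n p - g p)) ^ ((1:ℝ)/2))
      Filter.atTop (nhds 0) := by
    have := (ENNReal.continuous_rpow_const (y := (1:ℝ)/2)).tendsto 0 |>.comp h2
    simpa [Function.comp_def, ENNReal.zero_rpow_of_pos (by norm_num : (0:ℝ) < 1/2)] using this
  have hsq : Filter.Tendsto
      (fun n => ENNReal.ofReal (tauDist μ ν (fun _ => 0) (fun p => F n p - g p)))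
      Filter.atTop (nhds 0) :=
    tendsto_of_tendsto_of_tendsto_of_le_of_le tendsto_const_nhds hrpow
      (fun n => bot_le) (fun n => key_bound μ ν _)
  have htoReal := (ENNReal.tendsto_toReal (by simp)).comp hsq
  simp only [ENNReal.toReal_zero] at htoReal
  convert htoReal using 2 with n
  rw [heq n]
  exact (ENNReal.toReal_ofReal (tauDist_nonneg μ ν _ _)).symm


end VirtCont
end
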